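/- arXiv:1601.01504 — 8 statements merged into one kernel-verified Lean document; each statement's English description precedes it below -/
import Mathlib

section
/- The function r(X) = log_{|F|} |C_X| defined on subsets X of {1,...,n}, where C is an almost affine code and C_X is the projection (puncturing) of C to coordinates X, is the rank function of a matroid on {1,...,n}. -/
/-- The projection (puncturing) of a block code `C ⊆ F^n` to the coordinate set `X`. -/
def projC {F : Type*} [DecidableEq F] {n : ℕ} (C : Finset (Fin n → F)) (X : Finset (Fin n)) :
    Finset ({ i // i ∈ X } → F) :=
  C.image (fun c i => c i.1)

/-- `C ⊆ F^n` is an almost affine code of length `n` and dimension `k`: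
`|C| = |F|^k` and every projection has cardinality a power of `|F|`. -/
def IsAlmostAffineCode {F : Type*} [Fintype F] [DecidableEq F] (n k : ℕ)
    (C : Finset (Fin n → F)) : Prop :=
  C.card = Fintype.card F ^ k ∧
    ∀ X : Finset (Fin n), ∃ s : ℕ, (projC C X).card = Fintype.card F ^ s

/-- The `ct`-support of a word `c`. -/
def suppW {F : Type*} [DecidableEq F] {n : ℕ} (c ct : Fin n → F) : Finset (Fin n) :=
  Finset.univ.filter (fun i => c i ≠ ct i)

/-- `C(X, ct)`: the codewords of `C` agreeing with `ct` on `X`. -/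
def agreeOn {F : Type*} [DecidableEq F] {n : ℕ} (C : Finset (Fin n → F))
    (X : Finset (Fin n)) (ct : Fin n → F) : Finset (Fin n → F) :=
  C.filter (fun w => ∀ i ∈ X, w i = ct i)

/-- The `ct`-support of a code `D`. -/
def suppCode {F : Type*} [DecidableEq F] {n : ℕ} (D : Finset (Fin n → F)) (ct : Fin n → F) :
    Finset (Fin n) :=
  D.biUnion (fun w => suppW w ct)

/-!
If on `C` every coordinate in `Y` is a function of the coordinates in `X`, then `C_Y` is no larger
than `C_X`; conversely `|C_{X ∪ {x}}| = |C_X|` says exactly that `x` is such a function of `X`.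
Since "being a function of `X`" is closed under adding coordinates, (R3) follows, and (R2)
because `C_{X ∪ {x}}` injects into `C_X × F`. The powers of `|F| > 1` turn these cardinality
comparisons into comparisons of ranks.
-/

open Finset

namespace Finset

variable {α β γ : Type*} [DecidableEq β] [DecidableEq γ]

theorem card_image_le_card_image_of_factors {s : Finset α} {f : α → β} {g : α → γ}
    (hfg : ∀ a ∈ s, ∀ b ∈ s, g a = g b → f a = f b) : #(s.image f) ≤ #(s.image g) := by
  refine card_le_card_of_forall_subsingleton (fun u v => ∃ a ∈ s, f a = u ∧ g a = v) ?_ ?_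
  · simp only [mem_image]
    rintro _ ⟨a, ha, rfl⟩
    exact ⟨g a, ⟨a, ha, rfl⟩, a, ha, rfl, rfl⟩
  · rintro _ - _ ⟨-, a, ha, rfl, hav⟩ _ ⟨-, b, hb, rfl, hbv⟩
    exact hfg a ha b hb (hav.trans hbv.symm)

theorem injOn_of_card_image_le_card_image_comp {s : Finset α} {f : α → β} {φ : β → γ}
    (h : #(s.image f) ≤ #(s.image (φ ∘ f))) : Set.InjOn φ (s.image f) := by
  rw [← image_image] at h
  exact injOn_of_card_image_eq (h.antisymm' card_image_le)

end Finset

section Code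

variable {F : Type*} [DecidableEq F] {n : ℕ} (C : Finset (Fin n → F))

def Determines (X : Finset (Fin n)) (x : Fin n) : Prop :=
  ∀ c ∈ C, ∀ d ∈ C, (∀ i ∈ X, c i = d i) → c x = d x

theorem projC_eq_image_restrict (X : Finset (Fin n)) : projC C X = C.image X.restrict := rfl

variable {C}

theorem card_projC_mono {X Y : Finset (Fin n)} (h : X ⊆ Y) : #(projC C X) ≤ #(projC C Y) := by
  rw [projC_eq_image_restrict, ← restrict₂_comp_restrict h, ← image_image]
  exact card_image_le

theorem card_projC_le_of_determines {X Y : Finset (Fin n)} (h : ∀ y ∈ Y, Determines C X y) :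
    #(projC C Y) ≤ #(projC C X) :=
  card_image_le_card_image_of_factors fun c hc d hd hcd =>
    funext fun y => h y y.2 c hc d hd fun i hi => congrFun hcd ⟨i, hi⟩

theorem determines_of_card_projC_insert_le {X : Finset (Fin n)} {x : Fin n}
    (h : #(projC C (insert x X)) ≤ #(projC C X)) : Determines C X x := by
  intro c hc d hd hcd
  have hinj :
      Set.InjOn (restrict₂ (π := fun _ => F) (subset_insert x X)) (projC C (insert x X)) :=
    injOn_of_card_image_le_card_image_comp (f := (insert x X).restrict) (φ := restrict₂ _) h
  have := hinj (mem_image_of_mem _ hc) (mem_image_of_mem _ hd) (funext fun i => hcd i i.2)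
  exact congrFun this ⟨x, mem_insert_self x X⟩

theorem card_projC_insert_le [Fintype F] (X : Finset (Fin n)) (x : Fin n) :
    #(projC C (insert x X)) ≤ #(projC C X) * Fintype.card F :=
  calc #(projC C (insert x X))
      ≤ #(C.image fun c => (X.restrict c, c x)) :=
        card_image_le_card_image_of_factors fun c _ d _ hcd => funext fun i => by
          obtain ⟨hX, hx⟩ := Prod.ext_iff.mp hcd
          rcases mem_insert.mp i.2 with hi | hi
          · simpa [hi] using hx
          · exact congrFun hX ⟨i, hi⟩
    _ ≤ #(projC C X ×ˢ univ) :=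
        card_le_card fun _ hp => by
          obtain ⟨c, hc, rfl⟩ := mem_image.mp hp
          exact mem_product.mpr ⟨mem_image_of_mem _ hc, mem_univ _⟩
    _ = #(projC C X) * Fintype.card F := by rw [card_product, card_univ]

theorem card_projC_insert_insert_le {X : Finset (Fin n)} {x y : Fin n}
    (hx : #(projC C (insert x X)) ≤ #(projC C X))
    (hy : #(projC C (insert y X)) ≤ #(projC C X)) :
    #(projC C (insert y (insert x X))) ≤ #(projC C X) := by
  refine card_projC_le_of_determines fun z hz => ?_
  rcases mem_insert.mp hz with rfl | hz
  · exact determines_of_card_projC_insert_le hy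
  rcases mem_insert.mp hz with rfl | hz
  · exact determines_of_card_projC_insert_le hx
  · exact fun c _ d _ hcd => hcd z hz

end Code

theorem rank_of_almost_affine_is_matroid_rank_general
    {F : Type*} [Fintype F] [DecidableEq F] (hF : 1 < Fintype.card F)
    {n : ℕ} (C : Finset (Fin n → F))
    (r : Finset (Fin n) → ℕ)
    (hr : ∀ X : Finset (Fin n), (projC C X).card = Fintype.card F ^ r X) :
    r ∅ = 0 ∧
    (∀ (X : Finset (Fin n)) (x : Fin n),
      r X ≤ r (insert x X) ∧ r (insert x X) ≤ r X + 1) ∧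
    (∀ (X : Finset (Fin n)) (x y : Fin n),
      r (insert x X) = r X → r (insert y X) = r X →
      r (insert y (insert x X)) = r X) := by
  have hr_le {X Y : Finset (Fin n)} : r X ≤ r Y ↔ #(projC C X) ≤ #(projC C Y) := by
    rw [hr, hr, Nat.pow_le_pow_iff_right hF]
  refine ⟨?_, fun X x => ⟨?_, ?_⟩, fun X x y hx hy => ?_⟩
  · have h := card_le_one_of_subsingleton (projC C ∅)
    rw [hr, ← pow_zero (Fintype.card F), Nat.pow_le_pow_iff_right hF] at h
    omega
  · exact hr_le.mpr (card_projC_mono (subset_insert x X))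
  · rw [← Nat.pow_le_pow_iff_right hF, pow_succ, ← hr, ← hr]
    exact card_projC_insert_le X x
  · exact le_antisymm (hr_le.mpr (card_projC_insert_insert_le (hr_le.mp hx.le) (hr_le.mp hy.le)))
      (hr_le.mpr (card_projC_mono ((subset_insert x X).trans (subset_insert y _))))

/-- the function `r(X) = log_{|F|} |C_X|` associated to an almost affine
code `C` is the rank function of a matroid on `{1,…,n}`: it satisfies (R1), (R2), (R3). -/
theorem rank_of_almost_affine_is_matroid_rank
    {F : Type*} [Fintype F] [DecidableEq F] (hF : 1 < Fintype.card F)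
    {n k : ℕ} (C : Finset (Fin n → F)) (hC : IsAlmostAffineCode n k C)
    (r : Finset (Fin n) → ℕ)
    (hr : ∀ X : Finset (Fin n), (projC C X).card = Fintype.card F ^ r X) :
    r ∅ = 0 ∧
    (∀ (X : Finset (Fin n)) (x : Fin n),
      r X ≤ r (insert x X) ∧ r (insert x X) ≤ r X + 1) ∧
    (∀ (X : Finset (Fin n)) (x y : Fin n),
      r (insert x X) = r X → r (insert y X) = r X →
      r (insert y (insert x X)) = r X) :=
  rank_of_almost_affine_is_matroid_rank_general hF C r hr
end

section
/- Let C be an almost affine code of length n and dimension k on an alphabet F of cardinality q. Then for 1 ≤ i ≤ k, the i-th generalized Hamming weight d_i(C) equals the minimum of |Supp(D)| over all almost affine subcodes D of C of dimension i. -/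
set_option linter.unusedSectionVars false
section Aux
variable {F : Type*} [Fintype F] [DecidableEq F] {n : ℕ}

private lemma pow_factor {q s t a : ℕ} (hq : 1 < q) (h : a * q ^ s = q ^ t) :
    s ≤ t ∧ a = q ^ (t - s) := by
  have hq0 : 0 < q := lt_trans one_pos hq
  have ha : 0 < a := by
    rcases Nat.eq_zero_or_pos a with rfl | h'
    · simp at h; exact absurd h.symm (pow_pos hq0 t).ne'
    · exact h'
  have hst : s ≤ t := by
    have : q ^ s ≤ q ^ t := h ▸ Nat.le_mul_of_pos_left _ ha
    exact (Nat.pow_le_pow_iff_right hq).mp this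
  refine ⟨hst, ?_⟩
  have h2 : a * q ^ s = q ^ (t - s) * q ^ s := by
    rw [← pow_add, Nat.sub_add_cancel hst, h]
  exact Nat.eq_of_mul_eq_mul_right (pow_pos hq0 s) h2

private lemma projC_card_mono (C : Finset (Fin n → F)) {X Y : Finset (Fin n)} (hXY : X ⊆ Y) :
    (projC C X).card ≤ (projC C Y).card := by
  have h : projC C X = (projC C Y).image (fun g i => g ⟨i.1, hXY i.2⟩) := by
    unfold projC
    rw [Finset.image_image]
    rfl
  rw [h]; exact Finset.card_image_le

private lemma projC_card_insert_le (C : Finset (Fin n → F)) (X : Finset (Fin n)) (j : Fin n) :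
    (projC C (insert j X)).card ≤ (projC C X).card * Fintype.card F := by
  classical
  have h := Finset.card_le_card_of_injOn
    (f := fun g : {i // i ∈ insert j X} → F =>
      ((fun i : {i // i ∈ X} => g ⟨i.1, Finset.mem_insert_of_mem i.2⟩),
        g ⟨j, Finset.mem_insert_self j X⟩))
    (s := projC C (insert j X)) (t := (projC C X) ×ˢ (Finset.univ : Finset F))
    ?_ ?_
  · simpa [Finset.card_product] using h
  · intro g hg
    obtain ⟨c, hc, rfl⟩ := Finset.mem_image.mp hg
    refine Finset.mem_product.mpr ⟨?_, Finset.mem_univ _⟩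
    exact Finset.mem_image.mpr ⟨c, hc, rfl⟩
  · intro g₁ _ g₂ _ h
    have h1 := congrArg Prod.fst h
    have h2 := congrArg Prod.snd h
    simp only at h1 h2
    funext i
    rcases Finset.mem_insert.mp i.2 with hij | hiX
    · have : i = ⟨j, Finset.mem_insert_self j X⟩ := Subtype.ext hij
      rw [this]; exact h2
    · have : i = ⟨i.1, Finset.mem_insert_of_mem hiX⟩ := Subtype.ext rfl
      rw [this]; exact congrFun h1 ⟨i.1, hiX⟩

private lemma agreeOn_eq_filter (C : Finset (Fin n → F)) (X : Finset (Fin n)) (ct : Fin n → F) :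
    C.filter (fun c => (fun i : {i // i ∈ X} => c i.1) = (fun i => ct i.1)) = agreeOn C X ct := by
  unfold agreeOn
  apply Finset.filter_congr
  intro c _
  simp only [funext_iff, Subtype.forall, eq_iff_iff]

private lemma projC_univ_card (C : Finset (Fin n → F)) :
    (projC C Finset.univ).card = C.card := by
  unfold projC
  apply Finset.card_image_of_injective
  intro c₁ c₂ h
  funext i
  exact congrFun h ⟨i, Finset.mem_univ i⟩

private lemma pigeonhole_ge {α : Type*} (t : Finset α) (g : α → ℕ) (c : ℕ)
    (hle : ∀ b ∈ t, c ≤ g b) (hsum : (∑ b ∈ t, g b) = t.card * c) :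
    ∀ b ∈ t, g b = c := by
  intro b hb
  by_contra hne
  have h1 : c < g b := lt_of_le_of_ne (hle b hb) (Ne.symm hne)
  have h2 : t.card * c < ∑ b ∈ t, g b := by
    calc t.card * c = ∑ _ ∈ t, c := by rw [Finset.sum_const, smul_eq_mul]
    _ < ∑ b ∈ t, g b := Finset.sum_lt_sum hle ⟨b, hb, h1⟩
  omega

private lemma pigeonhole_le {α : Type*} (t : Finset α) (g : α → ℕ) (c : ℕ)
    (hle : ∀ b ∈ t, g b ≤ c) (hsum : (∑ b ∈ t, g b) = t.card * c) :
    ∀ b ∈ t, g b = c := by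
  intro b hb
  by_contra hne
  have h1 : g b < c := lt_of_le_of_ne (hle b hb) hne
  have h2 : ∑ b ∈ t, g b < t.card * c := by
    calc ∑ b ∈ t, g b < ∑ _ ∈ t, c := Finset.sum_lt_sum hle ⟨b, hb, h1⟩
    _ = t.card * c := by rw [Finset.sum_const, smul_eq_mul]
  omega

private lemma fiber_card (hF : 1 < Fintype.card F) {k : ℕ} (C : Finset (Fin n → F))
    (hCk : C.card = Fintype.card F ^ k) (r : Finset (Fin n) → ℕ)
    (hr : ∀ X, (projC C X).card = Fintype.card F ^ r X)
    (X : Finset (Fin n)) {ct : Fin n → F} (hct : ct ∈ C) :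
    (agreeOn C X ct).card * Fintype.card F ^ r X = Fintype.card F ^ k := by
  classical
  suffices H : ∀ m (X : Finset (Fin n)), Xᶜ.card = m → ∀ ct ∈ C,
      (agreeOn C X ct).card * Fintype.card F ^ r X = Fintype.card F ^ k from
    H _ X rfl ct hct
  intro m
  induction m using Nat.strong_induction_on with
  | _ m ih =>
  intro X hXm ct hct
  have hq1 : 1 < Fintype.card F := hF
  set q := Fintype.card F with hq
  have hq0 : 0 < q := lt_trans one_pos hq1
  by_cases hXu : X = Finset.univ
  · subst hXu
    have h1 : agreeOn C Finset.univ ct = {ct} := by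
      ext w
      simp only [agreeOn, Finset.mem_filter, Finset.mem_singleton, Finset.mem_univ,
        forall_true_left]
      constructor
      · rintro ⟨hw, h⟩; funext i; exact h i
      · rintro rfl; exact ⟨hct, fun i => rfl⟩
    have h2 : r Finset.univ = k := by
      have h3 := hr Finset.univ
      rw [projC_univ_card, hCk] at h3
      exact Nat.pow_right_injective hq1 h3.symm
    rw [h1, h2]; simp
  · obtain ⟨j, hj⟩ : ∃ j, j ∉ X := by
      by_contra h
      push_neg at h
      exact hXu (Finset.eq_univ_iff_forall.mpr h)
    set X' := insert j X with hX'
    have hcard' : X'ᶜ.card < m := by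
      have h4 : X'ᶜ = Xᶜ.erase j := by rw [hX', Finset.compl_insert]
      rw [h4, ← hXm]
      exact Finset.card_erase_lt_of_mem (Finset.mem_compl.mpr hj)
    have ihX' : ∀ w ∈ C, (agreeOn C X' w).card * q ^ r X' = q ^ k :=
      fun w hw => ih X'ᶜ.card hcard' X' rfl w hw
    set A' := (agreeOn C X' ct).card with hA'
    have hA'pos : 0 < A' := by
      apply Finset.card_pos.mpr
      exact ⟨ct, Finset.mem_filter.mpr ⟨hct, fun i _ => rfl⟩⟩
    have huniform : ∀ w ∈ C, (agreeOn C X' w).card = A' := by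
      intro w hw
      exact Nat.eq_of_mul_eq_mul_right (pow_pos hq0 (r X'))
        ((ihX' w hw).trans (ihX' ct hct).symm)
    -- decomposition of each X-fiber into X'-fibers
    have hdecomp : ∀ w ∈ C, (agreeOn C X w).card
        = ((agreeOn C X w).image (fun u => u j)).card * A' := by
      intro w hw
      rw [Finset.card_eq_sum_card_fiberwise (f := fun u => u j)
        (t := (agreeOn C X w).image (fun u => u j))
        (fun u hu => Finset.mem_image_of_mem _ hu)]
      have hconst : ∀ a ∈ (agreeOn C X w).image (fun u => u j),
          ((agreeOn C X w).filter (fun u => u j = a)).card = A' := by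
        intro a ha
        obtain ⟨u₀, hu₀, hu₀j⟩ := Finset.mem_image.mp ha
        have hu₀C : u₀ ∈ C := (Finset.mem_filter.mp hu₀).1
        have hw0 := (Finset.mem_filter.mp hu₀).2
        have hfib : (agreeOn C X w).filter (fun u => u j = a) = agreeOn C X' u₀ := by
          ext u
          simp only [agreeOn, Finset.filter_filter, Finset.mem_filter, hX',
            Finset.mem_insert, and_assoc]
          constructor
          · rintro ⟨huC, hagree, huj⟩
            refine ⟨huC, ?_⟩
            rintro i (rfl | hiX)
            · rw [huj, hu₀j]
            · rw [hagree i hiX, hw0 i hiX]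
          · rintro ⟨huC, h⟩
            refine ⟨huC, fun i hi => ?_, ?_⟩
            · rw [h i (Or.inr hi), hw0 i hi]
            · rw [h j (Or.inl rfl), hu₀j]
        rw [hfib]
        exact huniform u₀ hu₀C
      rw [Finset.sum_congr rfl hconst, Finset.sum_const, smul_eq_mul]
    have hebounds : ∀ w ∈ C, 1 ≤ ((agreeOn C X w).image (fun u => u j)).card ∧
        ((agreeOn C X w).image (fun u => u j)).card ≤ q := by
      intro w hw
      constructor
      · apply Finset.card_pos.mpr
        exact ⟨w j, Finset.mem_image_of_mem _
          (Finset.mem_filter.mpr ⟨hw, fun i _ => rfl⟩)⟩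
      · calc ((agreeOn C X w).image (fun u => u j)).card ≤ Finset.univ.card :=
            Finset.card_le_univ _
          _ = q := Finset.card_univ
    -- global fiberwise count over projC C X
    have hsum : ∑ b ∈ projC C X,
        (C.filter (fun c => (fun i : {i // i ∈ X} => c i.1) = b)).card = q ^ k := by
      rw [← hCk]
      exact (Finset.card_eq_sum_card_fiberwise
        (fun c (hc : c ∈ C) => Finset.mem_image_of_mem _ hc)).symm
    have hfibrep : ∀ b ∈ projC C X, ∃ w ∈ C,
        (C.filter (fun c => (fun i : {i // i ∈ X} => c i.1) = b)).card
          = (agreeOn C X w).card := by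
      intro b hb
      obtain ⟨w, hw, rfl⟩ := Finset.mem_image.mp hb
      exact ⟨w, hw, congrArg Finset.card (agreeOn_eq_filter C X w)⟩
    have hs : r X ≤ r X' := by
      have := projC_card_mono C (Finset.subset_insert j X)
      rw [hr, hr] at this
      exact (Nat.pow_le_pow_iff_right hq1).mp this
    have hs' : r X' ≤ r X + 1 := by
      have := projC_card_insert_le C X j
      rw [hr, hr, ← pow_succ] at this
      exact (Nat.pow_le_pow_iff_right hq1).mp this
    have htcard : (projC C X).card = q ^ r X := hr X
    have hcases : r X' = r X ∨ r X' = r X + 1 := by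
      rcases Nat.eq_or_lt_of_le hs with h | h
      · exact Or.inl h.symm
      · exact Or.inr (le_antisymm hs' h)
    rcases hcases with hcase | hcase
    · -- all e = 1
      have hAk : A' * q ^ r X = q ^ k := by rw [← hcase]; exact ihX' ct hct
      have hall := pigeonhole_ge (projC C X)
        (fun b => (C.filter (fun c => (fun i : {i // i ∈ X} => c i.1) = b)).card) A'
        (by
          intro b hb
          obtain ⟨w, hw, hwe⟩ := hfibrep b hb
          rw [hwe, hdecomp w hw]
          exact Nat.le_mul_of_pos_left _ (hebounds w hw).1)
        (by rw [hsum, htcard, mul_comm, hAk])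
      have hb : (fun i : {i // i ∈ X} => ct i.1) ∈ projC C X := Finset.mem_image_of_mem _ hct
      have h5 := hall _ hb
      have h6 : (agreeOn C X ct).card = A' :=
        (congrArg Finset.card (agreeOn_eq_filter C X ct)).symm.trans h5
      rw [h6, hAk]
    · -- all e = q
      have hAk : A' * q ^ (r X + 1) = q ^ k := by rw [← hcase]; exact ihX' ct hct
      have hall := pigeonhole_le (projC C X)
        (fun b => (C.filter (fun c => (fun i : {i // i ∈ X} => c i.1) = b)).card) (q * A')
        (by
          intro b hb
          obtain ⟨w, hw, hwe⟩ := hfibrep b hb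
          rw [hwe, hdecomp w hw]
          exact Nat.mul_le_mul_right _ (hebounds w hw).2)
        (by rw [hsum, htcard, ← hAk]; ring)
      have hb : (fun i : {i // i ∈ X} => ct i.1) ∈ projC C X := Finset.mem_image_of_mem _ hct
      have h5 := hall _ hb
      have h6 : (agreeOn C X ct).card = q * A' :=
        (congrArg Finset.card (agreeOn_eq_filter C X ct)).symm.trans h5
      rw [h6, ← hAk]
      ring

private lemma projC_agreeOn_card (hF : 1 < Fintype.card F) {k : ℕ} (C : Finset (Fin n → F))
    (hCk : C.card = Fintype.card F ^ k) (r : Finset (Fin n) → ℕ)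
    (hr : ∀ X, (projC C X).card = Fintype.card F ^ r X)
    (X Y : Finset (Fin n)) {ct : Fin n → F} (hct : ct ∈ C) :
    (projC (agreeOn C X ct) Y).card = Fintype.card F ^ (r (X ∪ Y) - r X) := by
  classical
  set q := Fintype.card F with hqdef
  set D := agreeOn C X ct with hD
  have hDagree : ∀ w ∈ D, ∀ a ∈ X, w a = ct a := fun w hw => (Finset.mem_filter.mp hw).2
  have hDC : ∀ w ∈ D, w ∈ C := fun w hw => (Finset.mem_filter.mp hw).1
  -- Step 1
  have step1 : (projC D Y).card = (projC D (X ∪ Y)).card := by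
    have himg : projC D Y = (projC D (X ∪ Y)).image
        (fun g (i : {i // i ∈ Y}) => g ⟨i.1, Finset.mem_union_right X i.2⟩) := by
      unfold projC; rw [Finset.image_image]; rfl
    rw [himg]
    apply Finset.card_image_of_injOn
    intro g₁ hg₁ g₂ hg₂ h
    obtain ⟨c₁, hc₁, rfl⟩ := Finset.mem_image.mp (Finset.mem_coe.mp hg₁)
    obtain ⟨c₂, hc₂, rfl⟩ := Finset.mem_image.mp (Finset.mem_coe.mp hg₂)
    funext i
    rcases Finset.mem_union.mp i.2 with hiX | hiY
    · show c₁ i.1 = c₂ i.1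
      rw [hDagree c₁ hc₁ i.1 hiX, hDagree c₂ hc₂ i.1 hiX]
    · exact congrFun h ⟨i.1, hiY⟩
  -- Step 2
  have step2 : D.card = (projC D (X ∪ Y)).card * (agreeOn C (X ∪ Y) ct).card := by
    rw [Finset.card_eq_sum_card_fiberwise
      (f := fun c (i : {i // i ∈ X ∪ Y}) => c i.1) (t := projC D (X ∪ Y))
      (fun c hc => Finset.mem_image_of_mem _ hc)]
    have hconst : ∀ b ∈ projC D (X ∪ Y),
        (D.filter (fun c => (fun i : {i // i ∈ X ∪ Y} => c i.1) = b)).card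
          = (agreeOn C (X ∪ Y) ct).card := by
      intro b hb
      obtain ⟨w, hw, rfl⟩ := Finset.mem_image.mp hb
      have hfib : D.filter (fun c => (fun i : {i // i ∈ X ∪ Y} => c i.1)
          = (fun i => w i.1)) = agreeOn C (X ∪ Y) w := by
        ext u
        simp only [hD, agreeOn, Finset.filter_filter, Finset.mem_filter,
          funext_iff, Subtype.forall, and_assoc]
        constructor
        · rintro ⟨huC, _, hagree⟩
          exact ⟨huC, hagree⟩
        · rintro ⟨huC, hagree⟩
          refine ⟨huC, fun a ha => ?_, hagree⟩
          rw [hagree a (Finset.mem_union_left Y ha), hDagree w hw a ha]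
      rw [hfib]
      have e1 := fiber_card hF C hCk r hr (X ∪ Y) (hDC w hw)
      have e2 := fiber_card hF C hCk r hr (X ∪ Y) hct
      exact Nat.eq_of_mul_eq_mul_right (pow_pos (lt_trans one_pos hF) (r (X ∪ Y)))
        (e1.trans e2.symm)
    rw [Finset.sum_congr rfl hconst, Finset.sum_const, smul_eq_mul]
  -- Step 3
  have hA'' : (agreeOn C (X ∪ Y) ct).card * q ^ r (X ∪ Y) = q ^ k :=
    fiber_card hF C hCk r hr (X ∪ Y) hct
  have hA''pos : 0 < (agreeOn C (X ∪ Y) ct).card :=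
    Finset.card_pos.mpr ⟨ct, Finset.mem_filter.mpr ⟨hct, fun _ _ => rfl⟩⟩
  have hDcard : D.card * q ^ r X = q ^ k := fiber_card hF C hCk r hr X hct
  have hkey : (projC D (X ∪ Y)).card * q ^ r X = q ^ r (X ∪ Y) := by
    apply Nat.eq_of_mul_eq_mul_right hA''pos
    calc (projC D (X ∪ Y)).card * q ^ r X * (agreeOn C (X ∪ Y) ct).card
        = ((projC D (X ∪ Y)).card * (agreeOn C (X ∪ Y) ct).card) * q ^ r X := by ring
      _ = D.card * q ^ r X := by rw [← step2]
      _ = q ^ k := hDcard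
      _ = q ^ r (X ∪ Y) * (agreeOn C (X ∪ Y) ct).card := by rw [mul_comm, hA'']
  rw [step1]
  exact (pow_factor hF hkey).2

private lemma agreeOn_almostAffine (hF : 1 < Fintype.card F) {k : ℕ} (C : Finset (Fin n → F))
    (hCk : C.card = Fintype.card F ^ k) (r : Finset (Fin n) → ℕ)
    (hr : ∀ X, (projC C X).card = Fintype.card F ^ r X)
    (X : Finset (Fin n)) {ct : Fin n → F} (hct : ct ∈ C) :
    IsAlmostAffineCode n (k - r X) (agreeOn C X ct) := by
  constructor
  · exact (pow_factor hF (fiber_card hF C hCk r hr X hct)).2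
  · intro Y
    exact ⟨r (X ∪ Y) - r X, projC_agreeOn_card hF C hCk r hr X Y hct⟩

private lemma r_univ (hF : 1 < Fintype.card F) {k : ℕ} (C : Finset (Fin n → F))
    (hCk : C.card = Fintype.card F ^ k) (r : Finset (Fin n) → ℕ)
    (hr : ∀ X, (projC C X).card = Fintype.card F ^ r X) :
    r Finset.univ = k := by
  have h3 := hr Finset.univ
  rw [projC_univ_card, hCk] at h3
  exact Nat.pow_right_injective hF h3.symm

private lemma r_empty (hF : 1 < Fintype.card F) (C : Finset (Fin n → F))
    (hCne : C.Nonempty) (r : Finset (Fin n) → ℕ)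
    (hr : ∀ X, (projC C X).card = Fintype.card F ^ r X) :
    r ∅ = 0 := by
  have h1 : (projC C ∅).card ≤ 1 := by
    apply Finset.card_le_one.mpr
    intro a _ b _
    funext i
    exact absurd i.2 (Finset.notMem_empty i.1)
  have h2 : 0 < (projC C ∅).card := Finset.card_pos.mpr (hCne.image _)
  have h3 : Fintype.card F ^ r ∅ = 1 := by rw [← hr]; omega
  by_contra h
  have := Nat.one_lt_pow h hF
  omega

private lemma r_insert_le (hF : 1 < Fintype.card F) (C : Finset (Fin n → F))
    (r : Finset (Fin n) → ℕ)
    (hr : ∀ X, (projC C X).card = Fintype.card F ^ r X)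
    (Z : Finset (Fin n)) (j : Fin n) : r (insert j Z) ≤ r Z + 1 := by
  have h := projC_card_insert_le C Z j
  rw [hr, hr, ← pow_succ] at h
  exact (Nat.pow_le_pow_iff_right hF).mp h

private lemma exists_subset_rank (hF : 1 < Fintype.card F) {k : ℕ} (C : Finset (Fin n → F))
    (hCk : C.card = Fintype.card F ^ k) (r : Finset (Fin n) → ℕ)
    (hr : ∀ X, (projC C X).card = Fintype.card F ^ r X)
    (i : ℕ) (hi1 : 1 ≤ i) :
    ∀ Z : Finset (Fin n), r Zᶜ + i ≤ k → ∃ X ⊆ Z, r Xᶜ + i = k := by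
  intro Z
  induction Z using Finset.strongInduction with
  | _ Z ihZ =>
  intro hZ
  rcases Nat.eq_or_lt_of_le hZ with h | h
  · exact ⟨Z, Finset.Subset.refl Z, h⟩
  · have hZne : Z.Nonempty := by
      rcases Finset.eq_empty_or_nonempty Z with rfl | h'
      · exfalso
        rw [Finset.compl_empty, r_univ hF C hCk r hr] at h
        omega
      · exact h'
    obtain ⟨j, hj⟩ := hZne
    have hsub : Z.erase j ⊂ Z := Finset.erase_ssubset hj
    have hZ' : r (Z.erase j)ᶜ + i ≤ k := by
      have hco : (Z.erase j)ᶜ = insert j Zᶜ := Finset.compl_erase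
      rw [hco]
      have := r_insert_le hF C r hr Zᶜ j
      omega
    obtain ⟨X, hX1, hX2⟩ := ihZ _ hsub hZ'
    exact ⟨X, hX1.trans (Finset.erase_subset _ _), hX2⟩

end Aux

/-- for an almost affine code `C` of dimension `k`, the `i`-th generalized
Hamming weight `d_i(C) = min{|X| : |X| - r*(X) = i}` (equivalently `r(E∖X) + i = k`)
equals the minimum cardinality of the support of an `i`-dimensional almost affine
subcode of `C`. -/
theorem generalized_hamming_weight_eq_min_subcode_support
    {F : Type*} [Fintype F] [DecidableEq F] (hF : 1 < Fintype.card F)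
    {n k : ℕ} (C : Finset (Fin n → F)) (hC : IsAlmostAffineCode n k C)
    (r : Finset (Fin n) → ℕ)
    (hr : ∀ X : Finset (Fin n), (projC C X).card = Fintype.card F ^ r X)
    (i : ℕ) (hi1 : 1 ≤ i) (hik : i ≤ k) :
    sInf {m : ℕ | ∃ X : Finset (Fin n), X.card = m ∧ r Xᶜ + i = k}
      = sInf {m : ℕ | ∃ (D : Finset (Fin n → F)) (ct : Fin n → F),
          D ⊆ C ∧ IsAlmostAffineCode n i D ∧ ct ∈ D ∧ (suppCode D ct).card = m} := by
  classical
  obtain ⟨hCk, -⟩ := hC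
  have hq0 : 0 < Fintype.card F := lt_trans one_pos hF
  have hCne : C.Nonempty := Finset.card_pos.mp (by rw [hCk]; exact pow_pos hq0 k)
  set S1 : Set ℕ := {m : ℕ | ∃ X : Finset (Fin n), X.card = m ∧ r Xᶜ + i = k} with hS1
  set S2 : Set ℕ := {m : ℕ | ∃ (D : Finset (Fin n → F)) (ct : Fin n → F),
      D ⊆ C ∧ IsAlmostAffineCode n i D ∧ ct ∈ D ∧ (suppCode D ct).card = m} with hS2
  -- direction 1 : from a rank witness to a subcode
  have dir1 : ∀ X : Finset (Fin n), r Xᶜ + i = k →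
      ∃ m' ∈ S2, m' ≤ X.card := by
    intro X hX
    obtain ⟨ct, hct⟩ := hCne
    refine ⟨(suppCode (agreeOn C Xᶜ ct) ct).card,
      ⟨agreeOn C Xᶜ ct, ct, Finset.filter_subset _ _, ?_,
        Finset.mem_filter.mpr ⟨hct, fun _ _ => rfl⟩, rfl⟩, ?_⟩
    · have haff := agreeOn_almostAffine hF C hCk r hr Xᶜ hct
      have hik' : k - r Xᶜ = i := by omega
      rwa [hik'] at haff
    · apply Finset.card_le_card
      intro a ha
      obtain ⟨w, hw, haw⟩ := Finset.mem_biUnion.mp ha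
      have hwa : w a ≠ ct a := (Finset.mem_filter.mp haw).2
      by_contra haX
      exact hwa ((Finset.mem_filter.mp hw).2 a (Finset.mem_compl.mpr haX))
  -- direction 2 : from a subcode to a rank witness
  have dir2 : ∀ (D : Finset (Fin n → F)) (ct : Fin n → F), D ⊆ C →
      IsAlmostAffineCode n i D → ct ∈ D →
      ∃ X : Finset (Fin n), r Xᶜ + i = k ∧ X.card ≤ (suppCode D ct).card := by
    intro D ct hDC hDaff hctD
    set Y := suppCode D ct with hY
    have hctC : ct ∈ C := hDC hctD
    have hsub : D ⊆ agreeOn C Yᶜ ct := by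
      intro w hw
      refine Finset.mem_filter.mpr ⟨hDC hw, fun a ha => ?_⟩
      by_contra hne
      exact (Finset.mem_compl.mp ha)
        (Finset.mem_biUnion.mpr ⟨w, hw,
          Finset.mem_filter.mpr ⟨Finset.mem_univ a, hne⟩⟩)
    have hcard : Fintype.card F ^ i ≤ (agreeOn C Yᶜ ct).card := by
      rw [← hDaff.1]; exact Finset.card_le_card hsub
    have hfc := fiber_card hF C hCk r hr Yᶜ hctC
    have hle : i + r Yᶜ ≤ k := by
      have h2 : Fintype.card F ^ i * Fintype.card F ^ r Yᶜ ≤ Fintype.card F ^ k := by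
        rw [← hfc]; exact Nat.mul_le_mul_right _ hcard
      rw [← pow_add] at h2
      exact (Nat.pow_le_pow_iff_right hF).mp h2
    obtain ⟨X, hXY, hXr⟩ := exists_subset_rank hF C hCk r hr i hi1 Y (by omega)
    exact ⟨X, hXr, Finset.card_le_card hXY⟩
  -- nonemptiness of S1
  have hLne : ∃ X : Finset (Fin n), r Xᶜ + i = k := by
    obtain ⟨X, -, hX⟩ := exists_subset_rank hF C hCk r hr i hi1 Finset.univ (by
      rw [Finset.compl_univ, r_empty hF C hCne r hr]
      omega)
    exact ⟨X, hX⟩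
  have hS1ne : S1.Nonempty := by
    obtain ⟨X, hX⟩ := hLne
    exact ⟨X.card, X, rfl, hX⟩
  have hS2ne : S2.Nonempty := by
    obtain ⟨X, hX⟩ := hLne
    obtain ⟨m', hm', -⟩ := dir1 X hX
    exact ⟨m', hm'⟩
  apply le_antisymm
  · obtain ⟨D, ct, hDC, hDaff, hctD, hcardD⟩ := Nat.sInf_mem hS2ne
    obtain ⟨X, hXr, hXle⟩ := dir2 D ct hDC hDaff hctD
    calc sInf S1 ≤ X.card := Nat.sInf_le ⟨X, rfl, hXr⟩
      _ ≤ (suppCode D ct).card := hXle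
      _ = sInf S2 := hcardD
  · obtain ⟨X, hXcard, hXr⟩ := Nat.sInf_mem hS1ne
    obtain ⟨m', hm', hle⟩ := dir1 X hXr
    calc sInf S2 ≤ m' := Nat.sInf_le hm'
      _ ≤ X.card := hle
      _ = sInf S1 := hXcard
end

section
/- Let M be a matroid on ground set E with nullity function n(X) = |X| − ρ(X). Then for each i in the range 1 ≤ i ≤ |E| − ρ(E), the i-th generalized Hamming weight satisfies d_i(M) = min{ |X_1 ∪ ... ∪ X_i| : X_1,...,X_i are non-redundant circuits of M }. -/
/-- `ρ` is the rank function of a matroid on the finite ground set `E`: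
axioms (R1), (R2), (R3). -/
def IsMatroidRank {E : Type*} [DecidableEq E] [Fintype E] (ρ : Finset E → ℕ) : Prop :=
  ρ ∅ = 0 ∧
    (∀ (X : Finset E) (x : E), ρ X ≤ ρ (insert x X) ∧ ρ (insert x X) ≤ ρ X + 1) ∧
    (∀ (X : Finset E) (x y : E), ρ (insert x X) = ρ X → ρ (insert y X) = ρ X →
      ρ (insert y (insert x X)) = ρ X)

/-- `X` is a circuit of the matroid with rank function `ρ`: a minimal set with
`ρ(X) = |X| - 1`. -/
def IsCircuit {E : Type*} [DecidableEq E] [Fintype E] (ρ : Finset E → ℕ)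
    (X : Finset E) : Prop :=
  X.card = ρ X + 1 ∧ ∀ Y : Finset E, Y ⊂ X → ρ Y = Y.card

/-- A family of distinct subsets is non-redundant if no member is contained in the
union of the others (equivalently, the union of all of them differs from the union of
any `s-1` of them). -/
def NonRedundant {E : Type*} [DecidableEq E] {s : ℕ} (Xs : Fin s → Finset E) : Prop :=
  Function.Injective Xs ∧
    ∀ j : Fin s, ¬ Xs j ⊆ (Finset.univ.erase j).biUnion Xs

section auxmr
variable {E : Type*} [DecidableEq E] [Fintype E]

lemma mr_rank_le_card (ρ : Finset E → ℕ) (hρ : IsMatroidRank ρ) (X : Finset E) :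
    ρ X ≤ X.card := by
  induction X using Finset.induction_on with
  | empty => simp [hρ.1]
  | @insert a s ha ih =>
    have := (hρ.2.1 s a).2
    rw [Finset.card_insert_of_notMem ha]
    omega

lemma mr_rank_union_le (ρ : Finset E → ℕ) (hρ : IsMatroidRank ρ) (X S : Finset E) :
    ρ X ≤ ρ (X ∪ S) := by
  induction S using Finset.induction_on with
  | empty => simp
  | @insert a s ha ih =>
    have h1 := (hρ.2.1 (X ∪ s) a).1
    rw [Finset.union_insert]
    omega

lemma mr_rank_mono (ρ : Finset E → ℕ) (hρ : IsMatroidRank ρ) {X Y : Finset E}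
    (h : X ⊆ Y) : ρ X ≤ ρ Y := by
  have := mr_rank_union_le ρ hρ X (Y \ X)
  rwa [Finset.union_sdiff_of_subset h] at this

lemma mr_exists_exact (ρ : Finset E → ℕ) (hρ : IsMatroidRank ρ) (i : ℕ) (Y : Finset E) :
    ∀ k, Y.card = ρ Y + k → i ≤ k → ∃ X ⊆ Y, X.card = ρ X + i := by
  induction Y using Finset.strongInduction with
  | _ Y ih =>
    intro k hk hik
    rcases eq_or_lt_of_le hik with rfl | hlt
    · exact ⟨Y, Finset.Subset.refl Y, hk⟩
    · have hY : Y.Nonempty := by rw [← Finset.card_pos]; omega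
      obtain ⟨y, hy⟩ := hY
      have hss : Y.erase y ⊂ Y := Finset.erase_ssubset hy
      have hcard : (Y.erase y).card + 1 = Y.card := Finset.card_erase_add_one hy
      have h1 : ρ Y ≤ ρ (Y.erase y) + 1 := by
        have := (hρ.2.1 (Y.erase y) y).2
        rwa [Finset.insert_erase hy] at this
      have h2 : ρ (Y.erase y) ≤ ρ Y := mr_rank_mono ρ hρ (Finset.erase_subset _ _)
      have h3 : ρ (Y.erase y) ≤ (Y.erase y).card := mr_rank_le_card ρ hρ _
      obtain ⟨X, hXs, hX⟩ := ih (Y.erase y) hss ((Y.erase y).card - ρ (Y.erase y))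
        (by omega) (by omega)
      exact ⟨X, hXs.trans (Finset.erase_subset _ _), hX⟩

lemma mr_bdd (ρ : Finset E → ℕ) (X : Finset E) :
    BddAbove {s : ℕ | ∃ Xs : Fin s → Finset E, Function.Injective Xs ∧
      (∀ j, IsCircuit ρ (Xs j)) ∧ NonRedundant Xs ∧ ∀ j, Xs j ⊆ X} := by
  refine ⟨Fintype.card (Finset E), ?_⟩
  rintro s ⟨Xs, hinj, -⟩
  simpa using Fintype.card_le_of_injective Xs hinj

lemma mr_zero_mem (ρ : Finset E → ℕ) (X : Finset E) :
    0 ∈ {s : ℕ | ∃ Xs : Fin s → Finset E, Function.Injective Xs ∧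
      (∀ j, IsCircuit ρ (Xs j)) ∧ NonRedundant Xs ∧ ∀ j, Xs j ⊆ X} := by
  refine ⟨Fin.elim0, fun a => a.elim0, fun j => j.elim0,
    ⟨fun a => a.elim0, fun j => j.elim0⟩, fun j => j.elim0⟩

end auxmr

/-- for a matroid `M = (E, ρ)` with nullity `n(X) = |X| - ρ(X)`, and
`1 ≤ i ≤ |E| - ρ(E)`, the `i`-th generalized Hamming weight
`d_i(M) = min{|X| : n(X) = i}` equals the minimal cardinality of a union of `i`
non-redundant circuits.  (We assume, as in [JV], that the nullity of any set equals
the maximal number of non-redundant circuits contained in it.) -/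
theorem generalized_hamming_weight_eq_min_union_nonredundant_circuits
    {E : Type*} [DecidableEq E] [Fintype E] (ρ : Finset E → ℕ)
    (hρ : IsMatroidRank ρ)
    (hJV : ∀ X : Finset E, X.card = ρ X +
      sSup {s : ℕ | ∃ Xs : Fin s → Finset E, Function.Injective Xs ∧
        (∀ j, IsCircuit ρ (Xs j)) ∧ NonRedundant Xs ∧ ∀ j, Xs j ⊆ X})
    (i : ℕ) (hi1 : 1 ≤ i) (hi2 : i + ρ Finset.univ ≤ Fintype.card E) :
    sInf {m : ℕ | ∃ X : Finset E, X.card = m ∧ X.card = ρ X + i}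
      = sInf {m : ℕ | ∃ Xs : Fin i → Finset E, Function.Injective Xs ∧
          (∀ j, IsCircuit ρ (Xs j)) ∧ NonRedundant Xs ∧
          (Finset.univ.biUnion Xs).card = m} := by
  set A := {m : ℕ | ∃ X : Finset E, X.card = m ∧ X.card = ρ X + i} with hA
  set B := {m : ℕ | ∃ Xs : Fin i → Finset E, Function.Injective Xs ∧
      (∀ j, IsCircuit ρ (Xs j)) ∧ NonRedundant Xs ∧
      (Finset.univ.biUnion Xs).card = m} with hB
  -- From a set of nullity exactly i, extract a family of i non-redundant circuits inside it.
  have key1 : ∀ X : Finset E, X.card = ρ X + i →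
      ∃ U : Finset E, U ⊆ X ∧ U.card ∈ B := by
    intro X hX
    have hJ := hJV X
    have hsup : sSup {s : ℕ | ∃ Xs : Fin s → Finset E, Function.Injective Xs ∧
        (∀ j, IsCircuit ρ (Xs j)) ∧ NonRedundant Xs ∧ ∀ j, Xs j ⊆ X} = i := Nat.add_left_cancel (hJ.symm.trans hX)
    have hmem := Nat.sSup_mem ⟨0, mr_zero_mem ρ X⟩ (mr_bdd ρ X)
    rw [hsup] at hmem
    obtain ⟨Xs, hinj, hcirc, hnr, hsub⟩ := hmem
    refine ⟨Finset.univ.biUnion Xs, ?_, ⟨Xs, hinj, hcirc, hnr, rfl⟩⟩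
    exact Finset.biUnion_subset.mpr fun j _ => hsub j
  -- From a family of i non-redundant circuits, extract a set of nullity exactly i
  -- inside its union.
  have key2 : ∀ Xs : Fin i → Finset E, Function.Injective Xs →
      (∀ j, IsCircuit ρ (Xs j)) → NonRedundant Xs →
      ∃ X : Finset E, X ⊆ Finset.univ.biUnion Xs ∧ X.card = ρ X + i := by
    intro Xs hinj hcirc hnr
    set U := Finset.univ.biUnion Xs with hU
    have hiU : i ∈ {s : ℕ | ∃ Ys : Fin s → Finset E, Function.Injective Ys ∧
        (∀ j, IsCircuit ρ (Ys j)) ∧ NonRedundant Ys ∧ ∀ j, Ys j ⊆ U} :=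
      ⟨Xs, hinj, hcirc, hnr, fun j => Finset.subset_biUnion_of_mem Xs (Finset.mem_univ j)⟩
    have hle : i ≤ sSup {s : ℕ | ∃ Ys : Fin s → Finset E, Function.Injective Ys ∧
        (∀ j, IsCircuit ρ (Ys j)) ∧ NonRedundant Ys ∧ ∀ j, Ys j ⊆ U} :=
      le_csSup (mr_bdd ρ U) hiU
    have hJ := hJV U
    obtain ⟨X, hXU, hXcard⟩ := mr_exists_exact ρ hρ i U _ hJ hle
    exact ⟨X, hXU, hXcard⟩
  -- A is nonempty
  have hAne : A.Nonempty := by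
    have h1 : ρ (Finset.univ : Finset E) ≤ (Finset.univ : Finset E).card :=
      mr_rank_le_card ρ hρ _
    have h2 : (Finset.univ : Finset E).card = Fintype.card E := Finset.card_univ
    obtain ⟨X, _, hX⟩ := mr_exists_exact ρ hρ i (Finset.univ : Finset E)
      ((Finset.univ : Finset E).card - ρ (Finset.univ : Finset E)) (by omega) (by omega)
    exact ⟨X.card, X, rfl, hX⟩
  -- B is nonempty
  have hBne : B.Nonempty := by
    obtain ⟨m, X, rfl, hX⟩ := hAne
    obtain ⟨U, _, hU⟩ := key1 X hX
    exact ⟨U.card, hU⟩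
  apply le_antisymm
  · obtain ⟨Xs, hinj, hcirc, hnr, hm⟩ := Nat.sInf_mem hBne
    obtain ⟨X, hXU, hXcard⟩ := key2 Xs hinj hcirc hnr
    calc sInf A ≤ X.card := Nat.sInf_le ⟨X, rfl, hXcard⟩
      _ ≤ (Finset.univ.biUnion Xs).card := Finset.card_le_card hXU
      _ = sInf B := hm
  · obtain ⟨X, hXc, hX⟩ := Nat.sInf_mem hAne
    obtain ⟨U, hUX, hU⟩ := key1 X hX
    calc sInf B ≤ U.card := Nat.sInf_le hU
      _ ≤ X.card := Finset.card_le_card hUX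
      _ = sInf A := hXc
end

section
/- Let C_1 and C_2 be two almost affine codes of dimension 1 on the same alphabet F and of the same length n, having the same associated matroid. Then C_1 and C_2 are equivalent codes. -/
/-- Code equivalence: `C'` is obtained from `C` by applying a bijection `τ i` to the
symbols in position `i` for each `i`, then permuting the positions by `σ`. -/
def CodeEquiv {F : Type*} [DecidableEq F] {n : ℕ} (C C' : Finset (Fin n → F)) : Prop :=
  ∃ (σ : Equiv.Perm (Fin n)) (τ : Fin n → (F ≃ F)),
    C' = C.image (fun c => fun j => τ (σ.symm j) (c (σ.symm j)))

section Aux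
set_option linter.unusedSectionVars false
variable {F : Type*} [Fintype F] [DecidableEq F] {n : ℕ}

lemma projC_single_card (C : Finset (Fin n → F)) (i : Fin n) :
    (projC C {i}).card = (C.image (fun c => c i)).card := by
  have hinj : Function.Injective
      (fun (f : { j // j ∈ ({i} : Finset (Fin n)) } → F) =>
        f ⟨i, Finset.mem_singleton_self i⟩) := by
    intro f f' h
    funext j
    have hj : j.1 = i := Finset.mem_singleton.mp j.2
    have hji : j = ⟨i, Finset.mem_singleton_self i⟩ := Subtype.ext hj
    rw [hji]; exact h
  have himg : C.image (fun c => c i) =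
      (projC C {i}).image (fun f => f ⟨i, Finset.mem_singleton_self i⟩) := by
    rw [projC, Finset.image_image]; rfl
  rw [himg, Finset.card_image_of_injective _ hinj]

lemma image_card_dichotomy (hF : 1 < Fintype.card F) {C : Finset (Fin n → F)}
    (h : IsAlmostAffineCode n 1 C) (i : Fin n) :
    (C.image (fun c => c i)).card = 1 ∨
      (C.image (fun c => c i)).card = Fintype.card F := by
  obtain ⟨s, hs⟩ := h.2 {i}
  rw [projC_single_card] at hs
  have hle : (C.image (fun c => c i)).card ≤ Fintype.card F := by
    have := Finset.card_le_univ (C.image (fun c => c i))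
    simpa using this
  have hsle : s ≤ 1 := by
    by_contra hgt
    push_neg at hgt
    have h2 : Fintype.card F ^ 2 ≤ Fintype.card F ^ s :=
      Nat.pow_le_pow_right (Nat.zero_lt_of_lt hF) hgt
    rw [hs] at hle
    rw [Nat.pow_two] at h2
    nlinarith [hle, hF, h2, le_trans h2 hle]
  interval_cases s
  · left; simpa using hs
  · right; simpa using hs

lemma injOn_eval {C : Finset (Fin n → F)} (hC : C.card = Fintype.card F) (i : Fin n)
    (hc : (C.image (fun c => c i)).card = Fintype.card F) :
    Set.InjOn (fun c : Fin n → F => c i) (C : Set (Fin n → F)) :=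
  Finset.card_image_iff.mp (by rw [hc, hC])

lemma full_of_image_card (hF : 1 < Fintype.card F) {C : Finset (Fin n → F)}
    (h : IsAlmostAffineCode n 1 C) (i : Fin n)
    (hc : (C.image (fun c => c i)).card = Fintype.card F) :
    ∀ a : F, ∃! c, c ∈ C ∧ c i = a := by
  have hCcard : C.card = Fintype.card F := by simpa using h.1
  have hinj : Set.InjOn (fun c : Fin n → F => c i) (C : Set (Fin n → F)) := injOn_eval hCcard i hc
  have hsurj : C.image (fun c => c i) = Finset.univ :=
    Finset.eq_univ_of_card _ (by simp [hc])
  intro a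
  have ha : a ∈ C.image (fun c => c i) := hsurj ▸ Finset.mem_univ a
  obtain ⟨c, hcC, hci⟩ := Finset.mem_image.mp ha
  exact ⟨c, ⟨hcC, hci⟩, fun c' ⟨hm, he⟩ => hinj hm hcC (by simp only []; rw [he, hci])⟩

end Aux

/-- two almost affine codes of dimension `1` on the same alphabet with the
same associated matroid are equivalent. -/


theorem dimension_one_same_matroid_equivalent
    {F : Type*} [Fintype F] [DecidableEq F] (hF : 1 < Fintype.card F)
    {n : ℕ} (C₁ C₂ : Finset (Fin n → F))
    (h₁ : IsAlmostAffineCode n 1 C₁) (h₂ : IsAlmostAffineCode n 1 C₂)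
    (hM : ∀ X : Finset (Fin n), (projC C₁ X).card = (projC C₂ X).card) :
    CodeEquiv C₁ C₂ := by
  classical
  have hc₁ : C₁.card = Fintype.card F := by simpa using h₁.1
  have hc₂ : C₂.card = Fintype.card F := by simpa using h₂.1
  have hMc : ∀ i : Fin n,
      (C₁.image (fun c => c i)).card = (C₂.image (fun c => c i)).card := by
    intro i
    rw [← projC_single_card, ← projC_single_card]
    exact hM {i}
  -- there is a coordinate where C₁ is "full"
  have hex : ∃ i₀ : Fin n, (C₁.image (fun c => c i₀)).card = Fintype.card F := by
    by_contra hcon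
    push_neg at hcon
    have hall : ∀ i, (C₁.image (fun c => c i)).card = 1 := fun i =>
      (image_card_dichotomy hF h₁ i).resolve_right (hcon i)
    have hle1 : C₁.card ≤ 1 := by
      apply Finset.card_le_one.mpr
      intro c hc c' hc'
      funext i
      exact Finset.card_le_one.mp (le_of_eq (hall i)) _
        (Finset.mem_image_of_mem _ hc) _ (Finset.mem_image_of_mem _ hc')
    omega
  obtain ⟨i₀, hi₀⟩ := hex
  have hi₀' : (C₂.image (fun c => c i₀)).card = Fintype.card F := by
    rw [← hMc]; exact hi₀
  have hfull₂ : ∀ a : F, ∃! c, c ∈ C₂ ∧ c i₀ = a := full_of_image_card hF h₂ i₀ hi₀'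
  have hinj₁ : Set.InjOn (fun c : Fin n → F => c i₀) (C₁ : Set (Fin n → F)) :=
    injOn_eval hc₁ i₀ hi₀
  have hinj₂ : Set.InjOn (fun c : Fin n → F => c i₀) (C₂ : Set (Fin n → F)) :=
    injOn_eval hc₂ i₀ hi₀'
  -- the matching bijection ψ : match at coordinate i₀
  obtain ⟨ψ, hψmem, hψval⟩ : ∃ ψ : (Fin n → F) → (Fin n → F),
      (∀ c, ψ c ∈ C₂) ∧ (∀ c, ψ c i₀ = c i₀) :=
    ⟨fun c => Finset.choose (fun w => w i₀ = c i₀) C₂ (hfull₂ (c i₀)),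
      fun c => Finset.choose_mem _ _ _,
      fun c => Finset.choose_property (fun w => w i₀ = c i₀) C₂ (hfull₂ (c i₀))⟩
  -- a base codeword
  have hC₁ne : C₁.Nonempty := by
    apply Finset.card_pos.mp
    rw [hc₁]
    exact Nat.zero_lt_of_lt hF
  obtain ⟨c₀, hc₀⟩ := hC₁ne
  -- the coordinatewise maps
  obtain ⟨t, htinj, ht⟩ : ∃ t : Fin n → F → F,
      (∀ i, Function.Injective (t i)) ∧ (∀ c ∈ C₁, ∀ j, t j (c j) = ψ c j) := by
    refine ⟨fun i =>
      if h : (C₁.image (fun c => c i)).card = Fintype.card F then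
        (fun a => ψ (Finset.choose (fun c => c i = a) C₁
          (full_of_image_card hF h₁ i h a)) i)
      else (fun a => Equiv.swap (c₀ i) (ψ c₀ i) a), ?_, ?_⟩
    · intro i
      by_cases hi : (C₁.image (fun c => c i)).card = Fintype.card F
      · simp only [dif_pos hi]
        intro a a' haa
        simp only at haa
        set ca := Finset.choose (fun c => c i = a) C₁ (full_of_image_card hF h₁ i hi a)
          with hca
        set ca' := Finset.choose (fun c => c i = a') C₁ (full_of_image_card hF h₁ i hi a')
          with hca'
        have hma : ca ∈ C₁ := Finset.choose_mem _ _ _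
        have hma' : ca' ∈ C₁ := Finset.choose_mem _ _ _
        have hpa : ca i = a := Finset.choose_property (fun c => c i = a) C₁ _
        have hpa' : ca' i = a' := Finset.choose_property (fun c => c i = a') C₁ _
        have hinj₂i : Set.InjOn (fun c : Fin n → F => c i) (C₂ : Set (Fin n → F)) :=
          injOn_eval hc₂ i (by rw [← hMc]; exact hi)
        have h2 : ψ ca = ψ ca' := hinj₂i (hψmem ca) (hψmem ca') haa
        have h3 : ca i₀ = ca' i₀ := by
          rw [← hψval ca, ← hψval ca', h2]
        have h4 : ca = ca' := hinj₁ hma hma' h3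
        rw [← hpa, ← hpa', h4]
      · simp only [dif_neg hi]
        exact (Equiv.swap (c₀ i) (ψ c₀ i)).injective
    · intro c hc j
      by_cases hj : (C₁.image (fun c => c j)).card = Fintype.card F
      · simp only [dif_pos hj]
        have hu := full_of_image_card hF h₁ j hj (c j)
        have heq : Finset.choose (fun x => x j = c j) C₁ (full_of_image_card hF h₁ j hj (c j))
            = c :=
          hu.unique ⟨Finset.choose_mem _ _ _, Finset.choose_property (fun x => x j = c j) C₁ _⟩
            ⟨hc, rfl⟩
        rw [heq]
      · simp only [dif_neg hj]
        have h1 : (C₁.image (fun x => x j)).card = 1 :=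
          (image_card_dichotomy hF h₁ j).resolve_right hj
        have hcc₀ : c j = c₀ j :=
          Finset.card_le_one.mp (le_of_eq h1) _
            (Finset.mem_image_of_mem _ hc) _ (Finset.mem_image_of_mem _ hc₀)
        have h2 : (C₂.image (fun x => x j)).card = 1 := by rw [← hMc]; exact h1
        have hψj : ψ c₀ j = ψ c j :=
          Finset.card_le_one.mp (le_of_eq h2) _
            (Finset.mem_image_of_mem _ (hψmem c₀)) _ (Finset.mem_image_of_mem _ (hψmem c))
        rw [hcc₀, Equiv.swap_apply_left, hψj]
  have htbij : ∀ i, Function.Bijective (t i) := fun i =>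
    Finite.injective_iff_bijective.mp (htinj i)
  refine ⟨Equiv.refl (Fin n), fun i => Equiv.ofBijective (t i) (htbij i), ?_⟩
  simp only [Equiv.refl_symm, Equiv.refl_apply, Equiv.ofBijective_apply]
  ext w
  constructor
  · intro hw
    obtain ⟨c, ⟨hcC, hci⟩, _⟩ := full_of_image_card hF h₁ i₀ hi₀ (w i₀)
    refine Finset.mem_image.mpr ⟨c, hcC, ?_⟩
    have hψw : ψ c = w := hinj₂ (hψmem c) hw (by simp only []; rw [hψval, hci])
    funext j
    rw [ht c hcC j, hψw]
  · intro hw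
    obtain ⟨c, hc, rfl⟩ := Finset.mem_image.mp hw
    have heq : (fun j => t j (c j)) = ψ c := funext (ht c hc)
    rw [heq]
    exact hψmem c
end

section
/- There is no duality operation on almost affine codes satisfying simultaneously: (1) the matroid of the dual code is the dual of the matroid of the code, (2) equivalent codes have equivalent duals, and (3) the dual of the dual is the original code. Concretely: there exist two almost affine codes C and C' of length 3 and dimension 2 on a 4-element alphabet with the same associated matroid (the uniform matroid U_{2,3}) but with different numbers of 1-dimensional almost affine subcodes (20 and 12 respectively), hence C and C' are not equivalent, contradicting the existence of such a duality. -/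
def xor4 (a b : Fin 4) : Fin 4 := ⟨(a.val ^^^ b.val) % 4, Nat.mod_lt _ (by norm_num)⟩

def Cxor : Finset (Fin 3 → Fin 4) :=
  (Finset.univ : Finset (Fin 4 × Fin 4)).image (fun p => ![p.1, p.2, xor4 p.1 p.2])

def Cadd : Finset (Fin 3 → Fin 4) :=
  (Finset.univ : Finset (Fin 4 × Fin 4)).image (fun p => ![p.1, p.2, p.1 + p.2])

lemma aac_one_iff (D : Finset (Fin 3 → Fin 4)) :
    IsAlmostAffineCode 3 1 D ↔
      D.card = 4 ∧ ∀ X : Finset (Fin 3), (projC D X).card = 1 ∨ (projC D X).card = 4 := by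
  have hF : Fintype.card (Fin 4) = 4 := by simp
  constructor
  · rintro ⟨h1, h2⟩
    rw [hF, pow_one] at h1
    refine ⟨h1, fun X => ?_⟩
    obtain ⟨s, hs⟩ := h2 X
    rw [hF] at hs
    have hle : (projC D X).card ≤ 4 := le_trans Finset.card_image_le h1.le
    have : (4:ℕ) ^ s ≤ 4 ^ 1 := by rw [pow_one]; omega
    have hs1 : s ≤ 1 := (Nat.pow_le_pow_iff_right (by norm_num)).mp this
    interval_cases s
    · left; simpa using hs
    · right; simpa using hs
  · rintro ⟨h1, h2⟩
    refine ⟨by simp [hF, h1], fun X => ?_⟩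
    rcases h2 X with h | h
    · exact ⟨0, by simp [hF, h]⟩
    · exact ⟨1, by simp [hF, h]⟩

lemma subcode_set_eq (C : Finset (Fin 3 → Fin 4)) :
    {D : Finset (Fin 3 → Fin 4) | D ⊆ C ∧ IsAlmostAffineCode 3 1 D} =
      ↑((C.powersetCard 4).filter
        (fun D => ∀ X : Finset (Fin 3), (projC D X).card = 1 ∨ (projC D X).card = 4)) := by
  ext D
  simp only [Set.mem_setOf_eq, Finset.coe_filter, Finset.mem_powersetCard, aac_one_iff]
  tauto


set_option linter.unusedSectionVars false
section
variable {F : Type*} [Fintype F] [DecidableEq F] {n : ℕ}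

def emap (σ : Equiv.Perm (Fin n)) (τ : Fin n → (F ≃ F)) (c : Fin n → F) : Fin n → F :=
  fun j => τ (σ.symm j) (c (σ.symm j))

lemma emap_inj (σ : Equiv.Perm (Fin n)) (τ : Fin n → (F ≃ F)) :
    Function.Injective (emap σ τ) := by
  intro c c' h
  funext i
  have := congrFun h (σ i)
  simp only [emap, Equiv.symm_apply_apply] at this
  exact (τ i).injective this

lemma emap_gf (σ : Equiv.Perm (Fin n)) (τ : Fin n → (F ≃ F)) (c : Fin n → F) :
    emap σ.symm (fun j => (τ (σ.symm j)).symm) (emap σ τ c) = c := by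
  funext i
  simp [emap]

lemma emap_fg (σ : Equiv.Perm (Fin n)) (τ : Fin n → (F ≃ F)) (c : Fin n → F) :
    emap σ τ (emap σ.symm (fun j => (τ (σ.symm j)).symm) c) = c := by
  funext i
  simp [emap]

lemma projC_emap_card (σ : Equiv.Perm (Fin n)) (τ : Fin n → (F ≃ F))
    (D : Finset (Fin n → F)) (X : Finset (Fin n)) :
    (projC (D.image (emap σ τ)) X).card = (projC D (X.image σ.symm)).card := by
  have hmem : ∀ i : {i // i ∈ X}, σ.symm i.1 ∈ X.image σ.symm :=
    fun i => Finset.mem_image_of_mem _ i.2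
  have hinj : Function.Injective
      (fun (u : {i // i ∈ X.image σ.symm} → F) (i : {i // i ∈ X}) =>
        τ (σ.symm i.1) (u ⟨σ.symm i.1, hmem i⟩)) := by
    intro u v huv
    funext j
    obtain ⟨j, hj⟩ := j
    obtain ⟨i, hi, rfl⟩ := Finset.mem_image.mp hj
    have h2 := congrFun huv ⟨i, hi⟩
    simp only at h2
    exact (τ (σ.symm i)).injective h2
  have him : projC (D.image (emap σ τ)) X
      = (projC D (X.image σ.symm)).image
        (fun (u : {i // i ∈ X.image σ.symm} → F) (i : {i // i ∈ X}) =>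
          τ (σ.symm i.1) (u ⟨σ.symm i.1, hmem i⟩)) := by
    simp only [projC, Finset.image_image]
    rfl
  rw [him, Finset.card_image_of_injective _ hinj]

lemma aac_emap (σ : Equiv.Perm (Fin n)) (τ : Fin n → (F ≃ F)) {k : ℕ}
    {D : Finset (Fin n → F)} (h : IsAlmostAffineCode n k D) :
    IsAlmostAffineCode n k (D.image (emap σ τ)) := by
  refine ⟨by rw [Finset.card_image_of_injective _ (emap_inj σ τ)]; exact h.1, fun X => ?_⟩
  rw [projC_emap_card]
  exact h.2 _

lemma subcodes_ncard_eq {C C' : Finset (Fin n → F)} (h : CodeEquiv C C') (k : ℕ) :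
    {D : Finset (Fin n → F) | D ⊆ C' ∧ IsAlmostAffineCode n k D}.ncard
      = {D : Finset (Fin n → F) | D ⊆ C ∧ IsAlmostAffineCode n k D}.ncard := by
  obtain ⟨σ, τ, rfl⟩ := h
  have hCf : C.image (fun c => fun j => τ (σ.symm j) (c (σ.symm j))) = C.image (emap σ τ) := rfl
  set g := emap σ.symm (fun j => (τ (σ.symm j)).symm) with hg
  have hset : {D : Finset (Fin n → F) | D ⊆ C.image (emap σ τ) ∧ IsAlmostAffineCode n k D}
      = (Finset.image (emap σ τ)) '' {D | D ⊆ C ∧ IsAlmostAffineCode n k D} := by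
    ext D'
    constructor
    · rintro ⟨hsub, haac⟩
      refine ⟨D'.image g, ⟨?_, aac_emap _ _ haac⟩, ?_⟩
      · have h1 : D'.image g ⊆ (C.image (emap σ τ)).image g :=
          Finset.image_subset_image hsub
        rwa [Finset.image_image, show g ∘ emap σ τ = id from funext (emap_gf σ τ),
          Finset.image_id] at h1
      · rw [Finset.image_image, show emap σ τ ∘ g = id from funext (emap_fg σ τ),
          Finset.image_id]
    · rintro ⟨D, ⟨hsub, haac⟩, rfl⟩
      exact ⟨Finset.image_subset_image hsub, aac_emap _ _ haac⟩
  rw [hCf, hset, Set.ncard_image_of_injective _ (Finset.image_injective (emap_inj σ τ))]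

end

set_option maxHeartbeats 40000000 in
set_option maxRecDepth 100000 in
/-- the dual of an almost affine code does not exist in general.
Concretely, there are two almost affine codes of length `3` and dimension `2` over a
`4`-element alphabet whose associated matroid is the uniform matroid `U_{2,3}` (i.e.,
every projection to `X` has cardinality `4^min(|X|,2)`), having `20` resp. `12`
one-dimensional almost affine subcodes, and which are not equivalent.  (Any duality
satisfying: (1) the matroid of the dual is the dual matroid, (2) equivalent codes have
equivalent duals, and (3) the double dual is the original code, would force these two
codes to be equivalent — a contradiction.) -/
theorem no_dual_of_almost_affine_code :
    ∃ C C' : Finset (Fin 3 → Fin 4),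
      IsAlmostAffineCode 3 2 C ∧ IsAlmostAffineCode 3 2 C' ∧
      (∀ X : Finset (Fin 3), (projC C X).card = 4 ^ min X.card 2) ∧
      (∀ X : Finset (Fin 3), (projC C' X).card = 4 ^ min X.card 2) ∧
      {D : Finset (Fin 3 → Fin 4) | D ⊆ C ∧ IsAlmostAffineCode 3 1 D}.ncard = 20 ∧
      {D : Finset (Fin 3 → Fin 4) | D ⊆ C' ∧ IsAlmostAffineCode 3 1 D}.ncard = 12 ∧
      ¬ CodeEquiv C C' := by
  have hF : Fintype.card (Fin 4) = 4 := by simp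
  have hx : ∀ X : Finset (Fin 3), (projC Cxor X).card = 4 ^ min X.card 2 := by decide
  have hz : ∀ X : Finset (Fin 3), (projC Cadd X).card = 4 ^ min X.card 2 := by decide
  have h20 : {D : Finset (Fin 3 → Fin 4) | D ⊆ Cxor ∧ IsAlmostAffineCode 3 1 D}.ncard = 20 := by
    rw [subcode_set_eq, Set.ncard_coe_finset]; decide
  have h12 : {D : Finset (Fin 3 → Fin 4) | D ⊆ Cadd ∧ IsAlmostAffineCode 3 1 D}.ncard = 12 := by
    rw [subcode_set_eq, Set.ncard_coe_finset]; decide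
  refine ⟨Cxor, Cadd,
    ⟨by rw [hF]; decide, fun X => ⟨min X.card 2, by rw [hF]; exact hx X⟩⟩,
    ⟨by rw [hF]; decide, fun X => ⟨min X.card 2, by rw [hF]; exact hz X⟩⟩,
    hx, hz, h20, h12, ?_⟩
  intro h
  have heq := subcodes_ncard_eq h 1
  rw [h12, h20] at heq
  exact absurd heq (by norm_num)
end

section
/- Let C be a multilinear code, i.e., an F_q-linear subspace of (F_q^r)^n such that dim_{F_q} C_X is divisible by r for all X ⊆ {1,...,n}. Viewing C as a linear code of length rn over F_q, its orthogonal complement C^⊥ in F_q^{rn} is also a multilinear code over F_q^r: for every X ⊆ {1,...,n}, dim_{F_q} (C^⊥)_{X_r} is divisible by r, where X_r = ⋃_{x ∈ X} {(x−1)r+1,...,(x−1)r+r}. -/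
/-!
Write `P_X` for the vectors vanishing on the blocks indexed by `X`, so that
`C_X ≅ C / (C ∩ P_X)`. For the block dot product `P_{Xᶜ}^⊥ = P_X`, hence
`C^⊥ ∩ P_X = (C + P_{Xᶜ})^⊥`, and counting dimensions gives
`dim (C^⊥)_X + dim C = r |X| + dim C_{Xᶜ}`. Both `dim C = dim C_{[n]}` and `dim C_{Xᶜ}` are
divisible by `r`, hence so is `dim (C^⊥)_X`.
-/

/-- Projection of a subspace of `(F_q^r)^n = (Fin n → Fin r → K)` to the coordinates
in `X ⊆ {1,…,n}` (keeping all `r` subcoordinates of each selected block). -/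
noncomputable def projSub {K : Type*} [Field K] {r n : ℕ}
    (C : Submodule K (Fin n → Fin r → K)) (X : Finset (Fin n)) :
    Submodule K ({ i // i ∈ X } → Fin r → K) :=
  C.map (LinearMap.funLeft K (Fin r → K) (fun i : { i // i ∈ X } => (i : Fin n)))

/-- `C` is a multilinear code over `F_q^r`: an `F_q`-linear subspace of `(F_q^r)^n`
all of whose projections have `F_q`-dimension divisible by `r`. -/
def IsMultilinearCode {K : Type*} [Field K] (r n : ℕ)
    (C : Submodule K (Fin n → Fin r → K)) : Prop :=
  ∀ X : Finset (Fin n), r ∣ Module.finrank K (projSub C X)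

open Module LinearMap
open LinearMap (BilinForm)

namespace LinearMap.BilinForm

variable {K V : Type*} [Field K] [AddCommGroup V] [Module K V]

theorem orthogonal_sup (B : BilinForm K V) (W₁ W₂ : Submodule K V) :
    B.orthogonal (W₁ ⊔ W₂) = B.orthogonal W₁ ⊓ B.orthogonal W₂ := by
  refine le_antisymm (le_inf (orthogonal_le le_sup_left) (orthogonal_le le_sup_right)) ?_
  rintro y ⟨h₁, h₂⟩ w hw
  obtain ⟨w₁, hw₁, w₂, hw₂, rfl⟩ := Submodule.mem_sup.mp hw
  change B (w₁ + w₂) y = 0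
  rw [map_add, LinearMap.add_apply, h₁ w₁ hw₁, h₂ w₂ hw₂, add_zero]

theorem finrank_add_finrank_orthogonal_of_ker_eq_bot [FiniteDimensional K V]
    {B : BilinForm K V} (hB : LinearMap.ker B = ⊥) (W : Submodule K V) :
    finrank K W + finrank K (B.orthogonal W) = finrank K V := by
  have h := finrank_add_finrank_orthogonal' (B := B) W
  rwa [hB, inf_bot_eq, finrank_bot, add_zero] at h

end LinearMap.BilinForm

theorem Submodule.finrank_map_add_finrank_inf_ker {K V W : Type*} [Field K] [AddCommGroup V]
    [Module K V] [FiniteDimensional K V] [AddCommGroup W] [Module K W]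
    (f : V →ₗ[K] W) (p : Submodule K V) :
    finrank K (p.map f) + finrank K (p ⊓ ker f : Submodule K V) = finrank K p := by
  have h := finrank_range_add_finrank_ker (f.domRestrict p)
  rwa [range_domRestrict, ker_domRestrict, ← Submodule.finrank_map_subtype_eq,
    Submodule.map_comap_subtype] at h

section BlockVectors

variable {K : Type*} [Field K] {ι κ : Type*}

variable (K κ) in
def restrictBlocks (X : Finset ι) : (ι → κ → K) →ₗ[K] (X → κ → K) :=
  funLeft K (κ → K) Subtype.val

theorem mem_ker_restrictBlocks {X : Finset ι} {y : ι → κ → K} :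
    y ∈ ker (restrictBlocks K κ X) ↔ ∀ i ∈ X, y i = 0 := by
  simp [restrictBlocks, funext_iff]

theorem restrictBlocks_surjective (X : Finset ι) :
    Function.Surjective (restrictBlocks K κ X) :=
  funLeft_surjective_of_injective _ _ _ Subtype.val_injective

theorem ker_restrictBlocks_univ [Fintype ι] :
    ker (restrictBlocks K κ (Finset.univ : Finset ι)) = ⊥ :=
  (Submodule.eq_bot_iff _).mpr fun _ hy =>
    funext fun i => mem_ker_restrictBlocks.mp hy i (Finset.mem_univ i)

variable [Fintype ι] [Fintype κ]

variable (K κ) in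
def blockDot : BilinForm K (ι → κ → K) :=
  mk₂ K (fun x y => ∑ i, ∑ j, x i j * y i j)
    (fun x x' y => by simp only [Pi.add_apply, add_mul, Finset.sum_add_distrib])
    (fun c x y => by simp only [Pi.smul_apply, smul_eq_mul, mul_assoc, Finset.mul_sum])
    (fun x y y' => by simp only [Pi.add_apply, mul_add, Finset.sum_add_distrib])
    (fun c x y => by simp only [Pi.smul_apply, smul_eq_mul, mul_left_comm, Finset.mul_sum])

theorem blockDot_apply (x y : ι → κ → K) :
    blockDot K κ x y = ∑ i, ∑ j, x i j * y i j := rfl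

theorem finrank_map_restrictBlocks_univ (C : Submodule K (ι → κ → K)) :
    finrank K (C.map (restrictBlocks K κ Finset.univ)) = finrank K C := by
  have h := Submodule.finrank_map_add_finrank_inf_ker (restrictBlocks K κ Finset.univ) C
  rwa [ker_restrictBlocks_univ, inf_bot_eq, finrank_bot, add_zero] at h

theorem card_mul_add_finrank_ker_restrictBlocks (X : Finset ι) :
    X.card * Fintype.card κ + finrank K (ker (restrictBlocks K κ X)) =
      finrank K (ι → κ → K) := by
  have h := finrank_range_add_finrank_ker (restrictBlocks K κ X)
  have hX : finrank K (X → κ → K) = X.card * Fintype.card κ := by simp [finrank_pi_fintype]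
  rwa [range_eq_top_of_surjective _ (restrictBlocks_surjective X), finrank_top, hX] at h

theorem finrank_ker_restrictBlocks [DecidableEq ι] (X : Finset ι) :
    finrank K (ker (restrictBlocks K κ X)) = Xᶜ.card * Fintype.card κ := by
  have h := card_mul_add_finrank_ker_restrictBlocks (K := K) (κ := κ) X
  have hcard : X.card * Fintype.card κ + Xᶜ.card * Fintype.card κ =
      Fintype.card ι * Fintype.card κ := by
    rw [← add_mul, Finset.card_add_card_compl]
  have hN : finrank K (ι → κ → K) = Fintype.card ι * Fintype.card κ := by
    simp [finrank_pi_fintype]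
  linarith

variable [DecidableEq ι] [DecidableEq κ]

theorem ker_blockDot : ker (blockDot (ι := ι) K κ) = ⊥ := by
  refine (Submodule.eq_bot_iff _).mpr fun x hx => funext₂ fun i j => ?_
  simpa [blockDot_apply, Pi.single_apply, ite_apply, mul_ite, Finset.sum_ite_eq'] using
    LinearMap.congr_fun hx (Pi.single i (Pi.single j 1))

theorem orthogonal_ker_restrictBlocks_compl (X : Finset ι) :
    (blockDot K κ).orthogonal (ker (restrictBlocks K κ Xᶜ)) = ker (restrictBlocks K κ X) := by
  refine (Submodule.eq_of_le_of_finrank_le (fun y hy w hw => ?_) ?_).symm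
  · refine Finset.sum_eq_zero fun i _ => ?_
    by_cases hi : i ∈ X
    · simp [mem_ker_restrictBlocks.mp hy i hi]
    · simp [mem_ker_restrictBlocks.mp hw i (Finset.mem_compl.mpr hi)]
  · have h := BilinForm.finrank_add_finrank_orthogonal_of_ker_eq_bot ker_blockDot
      (ker (restrictBlocks K κ Xᶜ))
    have hX := card_mul_add_finrank_ker_restrictBlocks (K := K) (κ := κ) X
    rw [finrank_ker_restrictBlocks, compl_compl] at h
    linarith

theorem finrank_map_restrictBlocks_orthogonal_add (C : Submodule K (ι → κ → K))
    (X : Finset ι) :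
    finrank K (((blockDot K κ).orthogonal C).map (restrictBlocks K κ X)) + finrank K C =
      X.card * Fintype.card κ + finrank K (C.map (restrictBlocks K κ Xᶜ)) := by
  set D := (blockDot K κ).orthogonal C
  have hDX := Submodule.finrank_map_add_finrank_inf_ker (restrictBlocks K κ X) D
  have hCX := Submodule.finrank_map_add_finrank_inf_ker (restrictBlocks K κ Xᶜ) C
  have hCD := BilinForm.finrank_add_finrank_orthogonal_of_ker_eq_bot ker_blockDot C
  have hsup := BilinForm.finrank_add_finrank_orthogonal_of_ker_eq_bot ker_blockDot
    (C ⊔ ker (restrictBlocks K κ Xᶜ))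
  rw [BilinForm.orthogonal_sup, orthogonal_ker_restrictBlocks_compl] at hsup
  have hinf := Submodule.finrank_sup_add_finrank_inf_eq C (ker (restrictBlocks K κ Xᶜ))
  rw [finrank_ker_restrictBlocks, compl_compl] at hinf
  linarith

end BlockVectors

theorem dual_of_multilinear_is_multilinear_general
    {K : Type*} [Field K] (r n : ℕ)
    (C D : Submodule K (Fin n → Fin r → K))
    (hC : IsMultilinearCode r n C)
    (hD : ∀ y : Fin n → Fin r → K,
      y ∈ D ↔ ∀ x ∈ C, (∑ i : Fin n, ∑ j : Fin r, x i j * y i j) = 0) :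
    IsMultilinearCode r n D := by
  intro X
  obtain rfl : D = (blockDot K (Fin r)).orthogonal C := Submodule.ext hD
  have hCr : r ∣ finrank K C := finrank_map_restrictBlocks_univ C ▸ hC Finset.univ
  have key := finrank_map_restrictBlocks_orthogonal_add C X
  rw [Fintype.card_fin] at key
  exact (Nat.dvd_add_left hCr).mp (key ▸ dvd_add (dvd_mul_left r _) (hC Xᶜ))

/-- the orthogonal complement (in `F_q^{rn}`, with the standard bilinear
form) of a multilinear code over `F_q^r` is again a multilinear code over `F_q^r`. -/
theorem dual_of_multilinear_is_multilinear
    {K : Type*} [Field K] [Fintype K] (r n : ℕ)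
    (C D : Submodule K (Fin n → Fin r → K))
    (hC : IsMultilinearCode r n C)
    (hD : ∀ y : Fin n → Fin r → K,
      y ∈ D ↔ ∀ x ∈ C, (∑ i : Fin n, ∑ j : Fin r, x i j * y i j) = 0) :
    IsMultilinearCode r n D :=
  dual_of_multilinear_is_multilinear_general r n C D hC hD
end

section
/- Let C be an almost affine code of length n and dimension k on alphabet F, and let c̃ ∈ C. Then the generalized critical exponents γ_i(c̃) are independent of the choice of codeword c̃: for any c̃, d̃ ∈ C and all 1 ≤ i ≤ n, γ_i(c̃) = γ_i(d̃). -/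
/-- The `i`-th generalized critical exponent of `C` with respect to `ct`:
the minimal number `j` of codewords whose `ct`-supports together cover at least `i`
coordinates. -/
noncomputable def critExp {F : Type*} [Fintype F] [DecidableEq F] {n : ℕ}
    (C : Finset (Fin n → F)) (ct : Fin n → F) (i : ℕ) : ℕ :=
  sInf {j : ℕ | ∃ cs : Fin j → (Fin n → F), (∀ l, cs l ∈ C) ∧
    i ≤ (Finset.univ.biUnion fun l => suppW (cs l) ct).card}

open Finset IncidenceAlgebra

section UniformFibers

variable {α β γ : Type*} [DecidableEq β] [DecidableEq γ]

def HasUniformFibers (s : Finset α) (f : α → β) : Prop :=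
  ∀ x ∈ s, #{y ∈ s | f y = f x} * #(s.image f) = #s

lemma HasUniformFibers.card_fiber_eq {s : Finset α} {f : α → β} (hf : HasUniformFibers s f)
    {x y : α} (hx : x ∈ s) (hy : y ∈ s) :
    #{z ∈ s | f z = f x} = #{z ∈ s | f z = f y} :=
  Nat.eq_of_mul_eq_mul_right (card_pos.2 ⟨f x, mem_image_of_mem f hx⟩)
    ((hf x hx).trans (hf y hy).symm)

lemma hasUniformFibers_of_injOn {s : Finset α} {f : α → β} (hf : Set.InjOn f s) :
    HasUniformFibers s f := by
  intro x hx
  have hfiber : {y ∈ s | f y = f x} = {x} := by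
    ext y
    simp only [mem_filter, mem_singleton]
    exact ⟨fun ⟨hy, hxy⟩ => hf hy hx hxy, by rintro rfl; exact ⟨hx, rfl⟩⟩
  rw [hfiber, card_singleton, one_mul, card_image_of_injOn hf]

lemma HasUniformFibers.comp {s : Finset α} {g : α → β} {h : β → γ}
    (hg : HasUniformFibers s g) (hh : HasUniformFibers (s.image g) h) :
    HasUniformFibers s (h ∘ g) := by
  intro x hx
  set T := {z ∈ s.image g | h z = h (g x)}
  have hfiber : #{y ∈ s | (h ∘ g) y = (h ∘ g) x} = #T * #{y ∈ s | g y = g x} := by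
    rw [card_eq_sum_card_fiberwise (f := g) (t := T) fun y hy => by
      obtain ⟨hys, hyx⟩ := mem_filter.1 (mem_coe.1 hy)
      exact mem_filter.2 ⟨mem_image_of_mem g hys, hyx⟩]
    refine sum_const_nat fun z hz => ?_
    obtain ⟨hzg, hzx⟩ := mem_filter.1 hz
    obtain ⟨y, hy, rfl⟩ := mem_image.1 hzg
    have hfiber_y :
        {w ∈ {y ∈ s | (h ∘ g) y = (h ∘ g) x} | g w = g y} = {w ∈ s | g w = g y} := by
      rw [filter_filter]
      exact filter_congr fun w _ => ⟨And.right, fun hw => ⟨by simp [hw, hzx], hw⟩⟩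
    rw [hfiber_y, hg.card_fiber_eq hy hx]
  rw [hfiber, ← image_image, mul_right_comm, hh (g x) (mem_image_of_mem g hx), mul_comm,
    hg x hx]

lemma HasUniformFibers.of_card_eq_pow {s : Finset α} {f : α → β} {q a b : ℕ} (hq : 1 < q)
    (hs : #s = q ^ a) (himage : #(s.image f) = q ^ b)
    (hfiber : ∀ x ∈ s, #{y ∈ s | f y = f x} ≤ q) : HasUniformFibers s f := by
  have hsum := card_eq_sum_card_image f s
  have hpos : ∀ z ∈ s.image f, 1 ≤ #{y ∈ s | f y = z} := by
    intro z hz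
    obtain ⟨x, hx, rfl⟩ := mem_image.1 hz
    exact card_pos.2 ⟨x, mem_filter.2 ⟨hx, rfl⟩⟩
  have hle : ∀ z ∈ s.image f, #{y ∈ s | f y = z} ≤ q := by
    intro z hz
    obtain ⟨x, hx, rfl⟩ := mem_image.1 hz
    exact hfiber x hx
  have hlower : q ^ b ≤ q ^ a := by
    rw [← hs, ← himage, hsum, card_eq_sum_ones]
    exact sum_le_sum hpos
  have hupper : q ^ a ≤ q ^ (b + 1) := by
    rw [← hs, pow_succ, ← himage, hsum, ← smul_eq_mul, ← sum_const]
    exact sum_le_sum hle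
  rw [Nat.pow_le_pow_iff_right hq] at hlower hupper
  intro x hx
  obtain rfl | rfl : a = b ∨ a = b + 1 := by omega
  · have hones : ∑ z ∈ s.image f, 1 = ∑ z ∈ s.image f, #{y ∈ s | f y = z} := by
      rw [← hsum, ← card_eq_sum_ones, hs, himage]
    rw [← ((sum_eq_sum_iff_of_le hpos).1 hones (f x) (mem_image_of_mem f hx)), one_mul,
      himage, hs]
  · have hqs : ∑ z ∈ s.image f, #{y ∈ s | f y = z} = ∑ z ∈ s.image f, q := by
      rw [← hsum, sum_const, smul_eq_mul, hs, himage, pow_succ, mul_comm]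
    rw [(sum_eq_sum_iff_of_le hle).1 hqs (f x) (mem_image_of_mem f hx), himage, hs, pow_succ,
      mul_comm]

end UniformFibers

section AlmostAffine

variable {F : Type*} [DecidableEq F] {n k : ℕ} {C : Finset (Fin n → F)}

lemma agreeOn_eq_filter_restrict (Y : Finset (Fin n)) (ct : Fin n → F) :
    agreeOn C Y ct = {c ∈ C | Y.restrict c = Y.restrict ct} := by
  simp [agreeOn, funext_iff, Finset.restrict]

lemma filter_suppW_subset_eq_agreeOn (ct : Fin n → F) (X : Finset (Fin n)) :
    {c ∈ C | suppW c ct ⊆ X} = agreeOn C Xᶜ ct := by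
  ext c
  simp [agreeOn, suppW, subset_iff, not_imp_comm]

variable [Fintype F]

lemma hasUniformFibers_projC_insert (hF : 1 < Fintype.card F) (hC : IsAlmostAffineCode n k C)
    (m : Fin n) (Y : Finset (Fin n)) :
    HasUniformFibers (projC C (insert m Y))
      (restrict₂ (π := fun _ => F) (subset_insert m Y)) := by
  obtain ⟨a, ha⟩ := hC.2 (insert m Y)
  obtain ⟨b, hb⟩ := hC.2 Y
  refine .of_card_eq_pow (b := b) hF ha ?_ fun u _ => ?_
  · rw [← hb, projC, image_image]
    rfl
  · -- a word on `insert m Y` is determined by its restriction to `Y` and its value at `m`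
    refine (card_le_card_of_injOn (fun v => v ⟨m, mem_insert_self m Y⟩)
      (fun _ _ => mem_univ _) fun v hv w hw hvw => ?_).trans_eq card_univ
    have hres := (mem_filter.1 hv).2.trans (mem_filter.1 hw).2.symm
    funext ⟨i, hi⟩
    rcases mem_insert.1 hi with rfl | hi
    · exact hvw
    · exact congrFun hres ⟨i, hi⟩

theorem hasUniformFibers_restrict (hF : 1 < Fintype.card F) (hC : IsAlmostAffineCode n k C)
    (Y : Finset (Fin n)) : HasUniformFibers C (Y.restrict (π := fun _ => F)) := by
  induction hY : #Yᶜ generalizing Y with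
  | zero =>
    obtain rfl : Y = univ := by simpa using hY
    exact hasUniformFibers_of_injOn fun c _ d _ hcd =>
      funext fun i => congrFun hcd ⟨i, mem_univ i⟩
  | succ r ih =>
    obtain ⟨m, hm⟩ := card_pos.1 (by omega : 0 < #Yᶜ)
    rw [mem_compl] at hm
    rw [← restrict₂_comp_restrict (subset_insert m Y)]
    refine (ih (insert m Y) ?_).comp (hasUniformFibers_projC_insert hF hC m Y)
    rw [compl_insert, card_erase_of_mem (mem_compl.2 hm), hY, Nat.add_sub_cancel]

theorem card_agreeOn_eq (hF : 1 < Fintype.card F) (hC : IsAlmostAffineCode n k C)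
    {ct dt : Fin n → F} (hct : ct ∈ C) (hdt : dt ∈ C) (Y : Finset (Fin n)) :
    #(agreeOn C Y ct) = #(agreeOn C Y dt) := by
  simpa only [agreeOn_eq_filter_restrict] using
    (hasUniformFibers_restrict hF hC Y).card_fiber_eq hct hdt

theorem card_filter_suppW_eq (hF : 1 < Fintype.card F) (hC : IsAlmostAffineCode n k C)
    {ct dt : Fin n → F} (hct : ct ∈ C) (hdt : dt ∈ C) (X : Finset (Fin n)) :
    #{c ∈ C | suppW c ct = X} = #{c ∈ C | suppW c dt = X} := by
  have hzeta : ∀ (et : Fin n → F) (X : Finset (Fin n)),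
      (#{c ∈ C | suppW c et ⊆ X} : ℤ) = ∑ Y ≤ X, (#{c ∈ C | suppW c et = Y} : ℤ) := by
    intro et X
    rw [card_eq_sum_card_fiberwise (f := (suppW · et)) (t := Iic X) fun c hc =>
      mem_Iic.2 (mem_filter.1 hc).2]
    push_cast
    refine sum_congr rfl fun Y hY => ?_
    rw [filter_filter, filter_congr fun c _ => and_iff_right_of_imp fun h => h ▸ mem_Iic.1 hY]
  have hcast : (#{c ∈ C | suppW c ct = X} : ℤ) = #{c ∈ C | suppW c dt = X} := by
    rw [moebius_inversion_bot _ _ (hzeta ct) X, moebius_inversion_bot _ _ (hzeta dt) X]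
    simp only [filter_suppW_subset_eq_agreeOn, card_agreeOn_eq hF hC hct hdt]
  exact_mod_cast hcast

lemma exists_suppW_eq_of_exists (hF : 1 < Fintype.card F) (hC : IsAlmostAffineCode n k C)
    {ct dt : Fin n → F} (hct : ct ∈ C) (hdt : dt ∈ C) {X : Finset (Fin n)}
    (h : ∃ c ∈ C, suppW c ct = X) : ∃ d ∈ C, suppW d dt = X := by
  rw [← filter_nonempty_iff, ← card_pos, card_filter_suppW_eq hF hC hct hdt] at h
  exact filter_nonempty_iff.1 (card_pos.1 h)

lemma exists_cover_of_exists_cover (hF : 1 < Fintype.card F) (hC : IsAlmostAffineCode n k C)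
    {ct dt : Fin n → F} (hct : ct ∈ C) (hdt : dt ∈ C) {i j : ℕ}
    (h : ∃ cs : Fin j → (Fin n → F), (∀ l, cs l ∈ C) ∧
      i ≤ #(univ.biUnion fun l => suppW (cs l) ct)) :
    ∃ ds : Fin j → (Fin n → F), (∀ l, ds l ∈ C) ∧
      i ≤ #(univ.biUnion fun l => suppW (ds l) dt) := by
  obtain ⟨cs, hcs, hcover⟩ := h
  choose ds hds hsupp using fun l => exists_suppW_eq_of_exists hF hC hct hdt ⟨cs l, hcs l, rfl⟩
  exact ⟨ds, hds, by simpa only [hsupp] using hcover⟩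

end AlmostAffine

theorem critExp_independent_of_basepoint_general
    {F : Type*} [Fintype F] [DecidableEq F] (hF : 1 < Fintype.card F)
    {n k : ℕ} (C : Finset (Fin n → F)) (hC : IsAlmostAffineCode n k C)
    (ct dt : Fin n → F) (hct : ct ∈ C) (hdt : dt ∈ C)
    (i : ℕ) :
    critExp C ct i = critExp C dt i := by
  unfold critExp
  congr 1
  ext j
  exact ⟨exists_cover_of_exists_cover hF hC hct hdt, exists_cover_of_exists_cover hF hC hdt hct⟩

/-- the generalized critical exponents of an almost affine code are
independent of the chosen base codeword. -/
theorem critExp_independent_of_basepoint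
    {F : Type*} [Fintype F] [DecidableEq F] (hF : 1 < Fintype.card F)
    {n k : ℕ} (C : Finset (Fin n → F)) (hC : IsAlmostAffineCode n k C)
    (ct dt : Fin n → F) (hct : ct ∈ C) (hdt : dt ∈ C)
    (i : ℕ) (hi1 : 1 ≤ i) (hi2 : i ≤ n) :
    critExp C ct i = critExp C dt i :=
  critExp_independent_of_basepoint_general hF C hC ct dt hct hdt i
end

section
/- Let C be an almost affine code of dimension k and length n with associated matroid rank function r, and let c̃ ∈ C. Then the dimension/length profile satisfies k_i(C) = max{ log_q |C(X, c̃)| : X ⊆ {1,...,n}, |X| = n−i } = k − min{ r(X) : |X| = n−i }, for 1 ≤ i ≤ n, where q = |F|. -/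
/-- The `i`-th entry of the dimension/length profile of `C`: the maximal dimension of an
almost affine subcode of `C` whose support has cardinality at most `i`. -/
noncomputable def dlProfile {F : Type*} [Fintype F] [DecidableEq F] {n : ℕ}
    (C : Finset (Fin n → F)) (i : ℕ) : ℕ :=
  sSup {d : ℕ | ∃ (D : Finset (Fin n → F)) (ct : Fin n → F),
    D ⊆ C ∧ IsAlmostAffineCode n d D ∧ ct ∈ D ∧ (suppCode D ct).card ≤ i}

set_option linter.unusedSectionVars false
open Finset

namespace AACaux

variable {F : Type*} [Fintype F] [DecidableEq F] {n : ℕ}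

def res (X : Finset (Fin n)) (c : Fin n → F) : {i // i ∈ X} → F := fun i => c i.1

lemma projC_eq (C : Finset (Fin n → F)) (X : Finset (Fin n)) :
    projC C X = C.image (res X) := rfl

lemma mem_agreeOn {C : Finset (Fin n → F)} {X : Finset (Fin n)} {c w : Fin n → F} :
    w ∈ agreeOn C X c ↔ w ∈ C ∧ ∀ i ∈ X, w i = c i := Finset.mem_filter

lemma res_eq_iff {X : Finset (Fin n)} {w c : Fin n → F} :
    res X w = res X c ↔ ∀ i ∈ X, w i = c i := by
  constructor
  · intro h i hi; exact congrFun h ⟨i, hi⟩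
  · intro h; funext i; exact h i.1 i.2

lemma agreeOn_eq (C : Finset (Fin n → F)) (X : Finset (Fin n)) (c : Fin n → F) :
    agreeOn C X c = C.filter (fun w => res X w = res X c) := by
  ext w
  simp only [mem_agreeOn, mem_filter, res_eq_iff]

lemma self_mem_agreeOn {C : Finset (Fin n → F)} {X : Finset (Fin n)} {c : Fin n → F}
    (hc : c ∈ C) : c ∈ agreeOn C X c :=
  mem_agreeOn.mpr ⟨hc, fun _ _ => rfl⟩

lemma proj_subset_image (C : Finset (Fin n → F)) {X Y : Finset (Fin n)} (h : X ⊆ Y) :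
    projC C X = (projC C Y).image (fun y i => y ⟨i.1, h i.2⟩) := by
  rw [projC_eq, projC_eq, image_image]; rfl

lemma proj_card_mono (C : Finset (Fin n → F)) {X Y : Finset (Fin n)} (h : X ⊆ Y) :
    (projC C X).card ≤ (projC C Y).card := by
  rw [proj_subset_image C h]; exact card_image_le

end AACaux

namespace AACaux

lemma fiber_mul {F : Type*} [Fintype F] [DecidableEq F] {n : ℕ}
    (hF : 1 < Fintype.card F) {k : ℕ} (C : Finset (Fin n → F))
    (hCcard : C.card = Fintype.card F ^ k)
    (r : Finset (Fin n) → ℕ)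
    (hr : ∀ X, (projC C X).card = Fintype.card F ^ r X) :
    ∀ (X : Finset (Fin n)) (c : Fin n → F), c ∈ C →
      (agreeOn C X c).card * Fintype.card F ^ r X = Fintype.card F ^ k := by
  set q := Fintype.card F with hqdef
  have hq0 : 0 < q := by omega
  have huniv : ∀ c ∈ C, (agreeOn C univ c).card * q ^ r univ = q ^ k := by
    intro c hc
    have h1 : agreeOn C univ c = {c} := by
      ext w
      simp only [mem_agreeOn, mem_singleton, mem_univ, forall_const]
      constructor
      · rintro ⟨hw, h⟩; funext i; exact h i
      · rintro rfl; exact ⟨hc, fun i => rfl⟩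
    have h2 : (projC C univ).card = C.card := by
      rw [projC_eq]
      apply card_image_of_injOn
      intro a _ b _ hab
      funext i
      exact congrFun hab ⟨i, mem_univ i⟩
    rw [h1, card_singleton, one_mul, ← hr, h2, hCcard]
  suffices H : ∀ (m : ℕ) (X : Finset (Fin n)), Xᶜ.card ≤ m → ∀ c ∈ C,
      (agreeOn C X c).card * q ^ r X = q ^ k by
    intro X c hc; exact H Xᶜ.card X le_rfl c hc
  intro m
  induction m with
  | zero =>
    intro X hX c hc
    have hXu : X = univ := by
      rw [Nat.le_zero, card_eq_zero, compl_eq_empty_iff] at hX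
      exact hX
    subst hXu; exact huniv c hc
  | succ m ih =>
    intro X hX c hc
    by_cases hXu : X = univ
    · subst hXu; exact huniv c hc
    · have hXc : Xᶜ.Nonempty := nonempty_iff_ne_empty.mpr
        (fun h => hXu ((compl_eq_empty_iff X).mp h))
      obtain ⟨j, hj⟩ := hXc
      have hjX : j ∉ X := mem_compl.mp hj
      set X' := insert j X with hX'def
      have hX'm : X'ᶜ.card ≤ m := by
        rw [hX'def, compl_insert, card_erase_of_mem hj]
        have h1 : 1 ≤ Xᶜ.card := card_pos.mpr ⟨j, hj⟩
        omega
      have IH : ∀ c' ∈ C, (agreeOn C X' c').card * q ^ r X' = q ^ k :=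
        fun c' hc' => ih X' hX'm c' hc'
      set ρ : ({i // i ∈ X'} → F) → ({i // i ∈ X} → F) :=
        fun y i => y ⟨i.1, mem_insert_of_mem i.2⟩ with hρdef
      have hρres : ∀ w : Fin n → F, ρ (res X' w) = res X w := fun w => rfl
      set f' := (agreeOn C X' c).card with hf'def
      have hf' : f' * q ^ r X' = q ^ k := IH c hc
      -- all X'-fibers have size f'
      have hfib' : ∀ y ∈ projC C X', (C.filter (fun w => res X' w = y)).card = f' := by
        intro y hy
        rw [projC_eq] at hy
        obtain ⟨c', hc', rfl⟩ := mem_image.mp hy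
        rw [← agreeOn_eq]
        exact Nat.eq_of_mul_eq_mul_right (pow_pos hq0 _) ((IH c' hc').trans hf'.symm)
      set N : ({i // i ∈ X} → F) → ℕ :=
        fun x => ((projC C X').filter (fun y => ρ y = x)).card with hNdef
      -- X-fiber over x has size N x * f'
      have hfibX : ∀ x ∈ projC C X, (C.filter (fun w => res X w = x)).card = N x * f' := by
        intro x hx
        have hmem : ∀ w ∈ C.filter (fun w => res X w = x),
            res X' w ∈ (projC C X').filter (fun y => ρ y = x) := by
          intro w hw
          obtain ⟨hwC, hwx⟩ := mem_filter.mp hw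
          refine mem_filter.mpr ⟨?_, ?_⟩
          · rw [projC_eq]; exact mem_image_of_mem _ hwC
          · rw [hρres w]; exact hwx
        rw [Finset.card_eq_sum_card_fiberwise hmem]
        have hcong : ∀ y ∈ (projC C X').filter (fun y => ρ y = x),
            ((C.filter (fun w => res X w = x)).filter (fun w => res X' w = y)).card = f' := by
          intro y hy
          obtain ⟨hy1, hy2⟩ := mem_filter.mp hy
          have heq : (C.filter (fun w => res X w = x)).filter (fun w => res X' w = y)
              = C.filter (fun w => res X' w = y) := by
            ext w
            simp only [mem_filter, and_assoc]
            constructor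
            · rintro ⟨h1, _, h3⟩; exact ⟨h1, h3⟩
            · rintro ⟨h1, h3⟩
              refine ⟨h1, ?_, h3⟩
              rw [← hρres w, h3, hy2]
          rw [heq]; exact hfib' y hy1
        rw [Finset.sum_congr rfl hcong, sum_const, smul_eq_mul]
      -- sum of N over X-projection is q ^ r X'
      have hsumN : ∑ x ∈ projC C X, N x = q ^ r X' := by
        rw [← hr X']
        refine (Finset.card_eq_sum_card_fiberwise ?_).symm
        intro y hy
        rw [projC_eq] at hy ⊢
        obtain ⟨c', hc', rfl⟩ := mem_image.mp hy
        exact mem_image_of_mem _ hc'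
      have hN1 : ∀ x ∈ projC C X, 1 ≤ N x := by
        intro x hx
        rw [projC_eq] at hx
        obtain ⟨c', hc', rfl⟩ := mem_image.mp hx
        refine card_pos.mpr ⟨res X' c', mem_filter.mpr ⟨?_, hρres c'⟩⟩
        rw [projC_eq]; exact mem_image_of_mem _ hc'
      have hNq : ∀ x ∈ projC C X, N x ≤ q := by
        intro x _
        have hinj : Set.InjOn (fun y : {i // i ∈ X'} → F => y ⟨j, mem_insert_self j X⟩)
            (((projC C X').filter (fun y => ρ y = x)) : Finset _) := by
          intro y1 hy1 y2 hy2 hj12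
          funext i
          rcases mem_insert.mp i.2 with h | h
          · have : i = ⟨j, mem_insert_self j X⟩ := Subtype.ext h
            rw [this]; exact hj12
          · have e := congrFun ((mem_filter.mp hy1).2.trans (mem_filter.mp hy2).2.symm) ⟨i.1, h⟩
            exact e
        calc N x ≤ (univ : Finset F).card :=
              card_le_card_of_injOn _ (fun y _ => mem_univ _) hinj
          _ = q := card_univ
      have hrle : r X ≤ r X' := by
        have := proj_card_mono C (subset_insert j X)
        rw [hr, hr] at this
        exact (Nat.pow_le_pow_iff_right hF).mp this
      have hrle2 : r X' ≤ r X + 1 := by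
        have h1 : q ^ r X' ≤ q ^ (r X + 1) := by
          rw [← hsumN, pow_succ, ← hr]
          calc ∑ x ∈ projC C X, N x ≤ ∑ _x ∈ projC C X, q := Finset.sum_le_sum hNq
            _ = (projC C X).card * q := by rw [sum_const, smul_eq_mul]
        exact (Nat.pow_le_pow_iff_right hF).mp h1
      have hx : res X c ∈ projC C X := by
        rw [projC_eq]; exact mem_image_of_mem _ hc
      have hNx : N (res X c) * q ^ r X = q ^ r X' := by
        rcases (show r X' = r X ∨ r X' = r X + 1 by omega) with h | h
        · have hsum : ∑ x ∈ projC C X, (1 : ℕ) = ∑ x ∈ projC C X, N x := by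
            rw [hsumN, h, sum_const, smul_eq_mul, mul_one, ← hr]
          have := (Finset.sum_eq_sum_iff_of_le hN1).mp hsum (res X c) hx
          rw [← this, one_mul, h]
        · have hsum : ∑ x ∈ projC C X, N x = ∑ _x ∈ projC C X, q := by
            rw [hsumN, h, sum_const, smul_eq_mul, hr, pow_succ]
          have := (Finset.sum_eq_sum_iff_of_le hNq).mp hsum (res X c) hx
          rw [this, h, pow_succ, mul_comm]
      rw [agreeOn_eq, hfibX (res X c) hx]
      calc N (res X c) * f' * q ^ r X = f' * (N (res X c) * q ^ r X) := by ring
        _ = f' * q ^ r X' := by rw [hNx]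
        _ = q ^ k := hf'

end AACaux

namespace AACaux

variable {F : Type*} [Fintype F] [DecidableEq F] {n k : ℕ}

lemma rank_le_k (hF : 1 < Fintype.card F) {C : Finset (Fin n → F)}
    (hCcard : C.card = Fintype.card F ^ k)
    {r : Finset (Fin n) → ℕ} (hr : ∀ X, (projC C X).card = Fintype.card F ^ r X)
    {c : Fin n → F} (hc : c ∈ C) (X : Finset (Fin n)) : r X ≤ k := by
  have h := fiber_mul hF C hCcard r hr X c hc
  have h1 : 1 ≤ (agreeOn C X c).card := card_pos.mpr ⟨c, self_mem_agreeOn hc⟩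
  have h2 : Fintype.card F ^ r X ≤ Fintype.card F ^ k := by
    calc Fintype.card F ^ r X ≤ (agreeOn C X c).card * Fintype.card F ^ r X :=
          Nat.le_mul_of_pos_left _ h1
      _ = Fintype.card F ^ k := h
  exact (Nat.pow_le_pow_iff_right hF).mp h2

lemma agreeOn_card (hF : 1 < Fintype.card F) {C : Finset (Fin n → F)}
    (hCcard : C.card = Fintype.card F ^ k)
    {r : Finset (Fin n) → ℕ} (hr : ∀ X, (projC C X).card = Fintype.card F ^ r X)
    {c : Fin n → F} (hc : c ∈ C) (X : Finset (Fin n)) :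
    (agreeOn C X c).card = Fintype.card F ^ (k - r X) := by
  have hq0 : 0 < Fintype.card F := by omega
  have h := fiber_mul hF C hCcard r hr X c hc
  have hk := rank_le_k hF hCcard hr hc X
  refine Nat.eq_of_mul_eq_mul_right (pow_pos hq0 (r X)) ?_
  rw [h, ← pow_add]
  congr 1
  omega

lemma rank_mono (hF : 1 < Fintype.card F) {C : Finset (Fin n → F)}
    {r : Finset (Fin n) → ℕ} (hr : ∀ X, (projC C X).card = Fintype.card F ^ r X)
    {X Y : Finset (Fin n)} (h : X ⊆ Y) : r X ≤ r Y := by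
  have := proj_card_mono C h
  rw [hr, hr] at this
  exact (Nat.pow_le_pow_iff_right hF).mp this

/-- `C(X, ct)` is an almost affine subcode of dimension `k - r X`. -/
lemma agreeOn_isAlmostAffine (hF : 1 < Fintype.card F) {C : Finset (Fin n → F)}
    (hCcard : C.card = Fintype.card F ^ k)
    {r : Finset (Fin n) → ℕ} (hr : ∀ X, (projC C X).card = Fintype.card F ^ r X)
    {ct : Fin n → F} (hct : ct ∈ C) (X : Finset (Fin n)) :
    IsAlmostAffineCode n (k - r X) (agreeOn C X ct) := by
  have hq0 : 0 < Fintype.card F := by omega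
  set D := agreeOn C X ct with hDdef
  refine ⟨agreeOn_card hF hCcard hr hct X, ?_⟩
  intro Y
  refine ⟨r (X ∪ Y) - r X, ?_⟩
  have hXXY : r X ≤ r (X ∪ Y) := rank_mono hF hr subset_union_left
  have hXYk : r (X ∪ Y) ≤ k := rank_le_k hF hCcard hr hct (X ∪ Y)
  have hXk : r X ≤ k := le_trans hXXY hXYk
  -- fibers of projection D → projC D Y
  have hmem : ∀ w ∈ D, res Y w ∈ projC D Y := by
    intro w hw; rw [projC_eq]; exact mem_image_of_mem _ hw
  have hDsum := Finset.card_eq_sum_card_fiberwise hmem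
  have hfibcard : ∀ y ∈ projC D Y,
      (D.filter (fun w => res Y w = y)).card = Fintype.card F ^ (k - r (X ∪ Y)) := by
    intro y hy
    rw [projC_eq] at hy
    obtain ⟨w₀, hw₀D, rfl⟩ := mem_image.mp hy
    have hw₀ := mem_agreeOn.mp hw₀D
    have heq : D.filter (fun w => res Y w = res Y w₀) = agreeOn C (X ∪ Y) w₀ := by
      ext w
      simp only [hDdef, mem_agreeOn, mem_filter, res_eq_iff]
      constructor
      · rintro ⟨⟨hwC, hwX⟩, hwY⟩
        refine ⟨hwC, fun i hi => ?_⟩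
        rcases mem_union.mp hi with h | h
        · rw [hwX i h, ← hw₀.2 i h]
        · exact hwY i h
      · rintro ⟨hwC, hwXY⟩
        exact ⟨⟨hwC, fun i hi => (hwXY i (mem_union_left Y hi)).trans (hw₀.2 i hi)⟩,
          fun i hi => hwXY i (mem_union_right X hi)⟩
    rw [heq]
    exact agreeOn_card hF hCcard hr hw₀.1 (X ∪ Y)
  rw [Finset.sum_congr rfl hfibcard, sum_const, smul_eq_mul,
    agreeOn_card hF hCcard hr hct X] at hDsum
  refine Nat.eq_of_mul_eq_mul_right (pow_pos hq0 (k - r (X ∪ Y))) ?_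
  rw [← hDsum, ← pow_add]
  congr 1
  omega

end AACaux

/-- for an almost affine code `C` with rank function `r` and any
codeword `ct`, the dimension/length profile satisfies
`k_i(C) = max{log_q |C(X,ct)| : |X| = n-i} = k - min{r(X) : |X| = n-i}`. -/
theorem dlProfile_characterizations
    {F : Type*} [Fintype F] [DecidableEq F] (hF : 1 < Fintype.card F)
    {n k : ℕ} (C : Finset (Fin n → F)) (hC : IsAlmostAffineCode n k C)
    (r : Finset (Fin n) → ℕ)
    (hr : ∀ X : Finset (Fin n), (projC C X).card = Fintype.card F ^ r X)
    (ct : Fin n → F) (hct : ct ∈ C) (i : ℕ) (hi1 : 1 ≤ i) (hi2 : i ≤ n) :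
    dlProfile C i = sSup {m : ℕ | ∃ X : Finset (Fin n), X.card = n - i ∧
        (agreeOn C X ct).card = Fintype.card F ^ m} ∧
    dlProfile C i = k - sInf {m : ℕ | ∃ X : Finset (Fin n), X.card = n - i ∧ r X = m} := by
  obtain ⟨hCcard, -⟩ := hC
  have hq0 : 0 < Fintype.card F := by omega
  set S₃ := {m : ℕ | ∃ X : Finset (Fin n), X.card = n - i ∧ r X = m} with hS₃def
  have hS₃ne : S₃.Nonempty := by
    obtain ⟨X₀, -, hX₀⟩ := Finset.exists_subset_card_eq
      (show n - i ≤ (Finset.univ : Finset (Fin n)).card by simp)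
    exact ⟨r X₀, X₀, hX₀, rfl⟩
  set μ := sInf S₃ with hμdef
  obtain ⟨Xs, hXscard, hXsr⟩ := Nat.sInf_mem hS₃ne
  have hμle : ∀ X : Finset (Fin n), X.card = n - i → μ ≤ r X :=
    fun X hX => Nat.sInf_le ⟨X, hX, rfl⟩
  have hrk : ∀ X, r X ≤ k := fun X => AACaux.rank_le_k hF hCcard hr hct X
  have hcard : ∀ (c : Fin n → F), c ∈ C → ∀ X,
      (agreeOn C X c).card = Fintype.card F ^ (k - r X) :=
    fun c hc X => AACaux.agreeOn_card hF hCcard hr hc X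
  -- `k - μ` is attained in the dlProfile set
  have hA : ∃ (D : Finset (Fin n → F)) (ct' : Fin n → F),
      D ⊆ C ∧ IsAlmostAffineCode n (k - μ) D ∧ ct' ∈ D ∧ (suppCode D ct').card ≤ i := by
    refine ⟨agreeOn C Xs ct, ct, Finset.filter_subset _ _, ?_,
      AACaux.self_mem_agreeOn hct, ?_⟩
    · have := AACaux.agreeOn_isAlmostAffine hF hCcard hr hct Xs
      rwa [hXsr] at this
    · have hsub : suppCode (agreeOn C Xs ct) ct ⊆ Xsᶜ := by
        refine Finset.biUnion_subset.mpr ?_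
        intro w hw x hx
        rw [Finset.mem_compl]
        intro hxXs
        exact (Finset.mem_filter.mp hx).2 ((AACaux.mem_agreeOn.mp hw).2 x hxXs)
      calc (suppCode (agreeOn C Xs ct) ct).card ≤ Xsᶜ.card := Finset.card_le_card hsub
        _ = n - Xs.card := by rw [Finset.card_compl, Fintype.card_fin]
        _ ≤ i := by rw [hXscard]; omega
  -- every element of the dlProfile set is at most `k - μ`
  have hB : ∀ d : ℕ, (∃ (D : Finset (Fin n → F)) (ct' : Fin n → F),
      D ⊆ C ∧ IsAlmostAffineCode n d D ∧ ct' ∈ D ∧ (suppCode D ct').card ≤ i) →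
      d ≤ k - μ := by
    rintro d ⟨D, ct', hDC, ⟨hDcard, -⟩, hct'D, hsupp⟩
    have hscard : (suppCode D ct')ᶜ.card = n - (suppCode D ct').card := by
      rw [Finset.card_compl, Fintype.card_fin]
    obtain ⟨X, hXsub, hXcard⟩ := Finset.exists_subset_card_eq
      (show n - i ≤ (suppCode D ct')ᶜ.card by rw [hscard]; omega)
    have hct'C : ct' ∈ C := hDC hct'D
    have hsub : D ⊆ agreeOn C X ct' := by
      intro w hw
      refine AACaux.mem_agreeOn.mpr ⟨hDC hw, fun x hx => ?_⟩
      by_contra hne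
      exact (Finset.mem_compl.mp (hXsub hx))
        (Finset.mem_biUnion.mpr ⟨w, hw, Finset.mem_filter.mpr ⟨Finset.mem_univ x, hne⟩⟩)
    have hle : Fintype.card F ^ d ≤ Fintype.card F ^ (k - r X) := by
      rw [← hDcard, ← hcard ct' hct'C X]
      exact Finset.card_le_card hsub
    have h1 := (Nat.pow_le_pow_iff_right hF).mp hle
    have h2 := hμle X hXcard
    omega
  -- `k - μ` is in the second set
  have hCmem : k - μ ∈ {m : ℕ | ∃ X : Finset (Fin n), X.card = n - i ∧
      (agreeOn C X ct).card = Fintype.card F ^ m} :=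
    ⟨Xs, hXscard, by rw [hcard ct hct Xs, hXsr]⟩
  have hDub : ∀ m : ℕ, (∃ X : Finset (Fin n), X.card = n - i ∧
      (agreeOn C X ct).card = Fintype.card F ^ m) → m ≤ k - μ := by
    rintro m ⟨X, hXcard, hm⟩
    rw [hcard ct hct X] at hm
    have h1 : k - r X = m := Nat.pow_right_injective hF hm
    have h2 := hμle X hXcard
    have h3 := hrk X
    omega
  have h1 : dlProfile C i = k - μ := by
    unfold dlProfile
    exact le_antisymm (csSup_le ⟨k - μ, hA⟩ (fun d hd => hB d hd))
      (le_csSup ⟨k - μ, fun d hd => hB d hd⟩ hA)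
  have h2 : sSup {m : ℕ | ∃ X : Finset (Fin n), X.card = n - i ∧
      (agreeOn C X ct).card = Fintype.card F ^ m} = k - μ :=
    le_antisymm (csSup_le ⟨k - μ, hCmem⟩ (fun m hm => hDub m hm))
      (le_csSup ⟨k - μ, fun m hm => hDub m hm⟩ hCmem)
  exact ⟨h1.trans h2.symm, h1⟩
end
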